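/- arXiv:1701.04963 — 5 statements merged into one kernel-verified Lean document; each statement's English description precedes it below -/
import Mathlib

section
/- For any partition λ, the product of the opposite hook lengths over all cells of λ is at least the product of the hook lengths over all cells of λ: ∏_{c∈λ} h_c^op ≥ ∏_{c∈λ} h_c. -/
/-- The cells of a partition `p` (parts `p 0 ≥ p 1 ≥ ⋯`), in 0-indexed
coordinates `(a, b)` (column `a`, row `b`), all of which lie in `range n × range n`
when `p` is a partition of `n`. -/
def cells (p : ℕ → ℕ) (n : ℕ) : Finset (ℕ × ℕ) :=
  (Finset.range n ×ˢ Finset.range n).filter fun c => c.1 < p c.2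

/-- The conjugate partition: `conjP p n a` is the number of rows `b < n` with `a < p b`. -/
def conjP (p : ℕ → ℕ) (n : ℕ) (a : ℕ) : ℕ :=
  ((Finset.range n).filter fun b => a < p b).card

/-- The hook length of a cell `c = (a,b)`: `(λ_b - a) + (λ'_a - b) - 1` in 0-indexed
coordinates (which is `(λ_b - a) + (λ'_a - b) + 1` in the 1-indexed convention). -/
def hookLen (p : ℕ → ℕ) (n : ℕ) (c : ℕ × ℕ) : ℕ :=
  (p c.2 - c.1) + (conjP p n c.1 - c.2) - 1

/-- The opposite hook length of a 0-indexed cell `(a,b)` is `a + b + 1`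
(that is, `a + b - 1` in the 1-indexed convention). -/
def hookOp (c : ℕ × ℕ) : ℕ := c.1 + c.2 + 1

/-- `p` is a partition of `n`: weakly decreasing, at most `n` parts, total size `n`. -/
def IsPartitionOf (n : ℕ) (p : ℕ → ℕ) : Prop :=
  Antitone p ∧ p n = 0 ∧ ∑ i ∈ Finset.range n, p i = n

/-- A downward-closed finset of naturals is an initial segment. -/
lemma down_closed_eq_range (F : Finset ℕ) (h : ∀ x ∈ F, ∀ y, y < x → y ∈ F) :
    F = Finset.range F.card := by
  ext k
  simp only [Finset.mem_range]
  constructor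
  · intro hk
    have hsub : Finset.range (k + 1) ⊆ F := by
      intro y hy
      rcases Nat.lt_succ_iff_lt_or_eq.mp (Finset.mem_range.mp hy) with h' | rfl
      · exact h k hk y h'
      · exact hk
    simpa using Finset.card_le_card hsub
  · intro hk
    by_contra hkF
    have hsub : F ⊆ Finset.range k := by
      intro x hx
      rw [Finset.mem_range]
      by_contra hxk
      rcases Nat.lt_or_ge k x with h' | h'
      · exact hkF (h x hx k h')
      · have : x = k := by omega
        exact hkF (this ▸ hx)
    have := Finset.card_le_card hsub
    simp only [Finset.card_range] at this
    omega

lemma filter_lt_eq_range (p : ℕ → ℕ) (hp : Antitone p) (n a : ℕ) :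
    (Finset.range n).filter (fun b => a < p b) = Finset.range (conjP p n a) := by
  refine down_closed_eq_range _ ?_
  intro x hx y hy
  simp only [Finset.mem_filter, Finset.mem_range] at hx ⊢
  exact ⟨by omega, lt_of_lt_of_le hx.2 (hp (le_of_lt hy))⟩

lemma prod_cells (p : ℕ → ℕ) (n : ℕ) (hpn : ∀ b, p b ≤ n) (f : ℕ × ℕ → ℕ) :
    ∏ c ∈ cells p n, f c = ∏ b ∈ Finset.range n, ∏ a ∈ Finset.range (p b), f (a, b) := by
  rw [cells, Finset.prod_filter, Finset.prod_product_right]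
  refine Finset.prod_congr rfl fun b _ => ?_
  rw [← Finset.prod_filter]
  refine Finset.prod_congr ?_ (fun _ _ => rfl)
  ext a
  simp only [Finset.mem_filter, Finset.mem_range]
  have := hpn b
  omega

/-- Reversal-rearrangement inequality: pairing an increasing sequence with the
reversal of an antitone sequence gives a smaller product than the antitone pairing. -/
lemma rev_le : ∀ (k : ℕ) (f : ℕ → ℕ), Antitone f → ∀ s : ℕ,
    ∏ b ∈ Finset.range k, (s + b + f (k - 1 - b)) ≤ ∏ b ∈ Finset.range k, (s + b + f b) := by
  intro k
  induction k using Nat.strong_induction_on with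
  | _ k ih =>
    match k with
    | 0 => intro f hf s; simp
    | 1 => intro f hf s; simp
    | (k + 2) =>
      intro f hf s
      conv_lhs => rw [Finset.prod_range_succ', Finset.prod_range_succ]
      conv_rhs => rw [Finset.prod_range_succ', Finset.prod_range_succ]
      have hf' : Antitone (fun i => f (i + 1)) := fun i j hij => hf (by omega)
      have key := ih k (by omega) (fun i => f (i + 1)) hf' (s + 1)
      have hmid : ∏ x ∈ Finset.range k, (s + (x + 1) + f (k + 2 - 1 - (x + 1)))
          ≤ ∏ x ∈ Finset.range k, (s + (x + 1) + f (x + 1)) := by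
        calc ∏ x ∈ Finset.range k, (s + (x + 1) + f (k + 2 - 1 - (x + 1)))
            = ∏ x ∈ Finset.range k, (s + 1 + x + (fun i => f (i + 1)) (k - 1 - x)) := by
              refine Finset.prod_congr rfl fun x hx => ?_
              simp only [Finset.mem_range] at hx
              have h1 : k + 2 - 1 - (x + 1) = (k - 1 - x) + 1 := by omega
              rw [h1]; ring_nf
          _ ≤ ∏ x ∈ Finset.range k, (s + 1 + x + (fun i => f (i + 1)) x) := key
          _ = ∏ x ∈ Finset.range k, (s + (x + 1) + f (x + 1)) := by
              refine Finset.prod_congr rfl fun x hx => ?_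
              ring_nf
      have hu : f (k + 1) ≤ f 0 := hf (by omega)
      have hscal : (s + (k + 1) + f (k + 2 - 1 - (k + 1))) * (s + 0 + f (k + 2 - 1 - 0))
          ≤ (s + (k + 1) + f (k + 1)) * (s + 0 + f 0) := by
        have h1 : k + 2 - 1 - (k + 1) = 0 := by omega
        have h2 : k + 2 - 1 - 0 = k + 1 := by omega
        rw [h1, h2]
        nlinarith
      calc (∏ x ∈ Finset.range k, (s + (x + 1) + f (k + 2 - 1 - (x + 1))))
            * (s + (k + 1) + f (k + 2 - 1 - (k + 1))) * (s + 0 + f (k + 2 - 1 - 0))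
          = (∏ x ∈ Finset.range k, (s + (x + 1) + f (k + 2 - 1 - (x + 1))))
            * ((s + (k + 1) + f (k + 2 - 1 - (k + 1))) * (s + 0 + f (k + 2 - 1 - 0))) := by ring
        _ ≤ (∏ x ∈ Finset.range k, (s + (x + 1) + f (x + 1)))
            * ((s + (k + 1) + f (k + 1)) * (s + 0 + f 0)) := Nat.mul_le_mul hmid hscal
        _ = (∏ x ∈ Finset.range k, (s + (x + 1) + f (x + 1)))
            * (s + (k + 1) + f (k + 1)) * (s + 0 + f 0) := by ring

/-- Main inequality, proven by induction on the width (removing the first column). -/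
lemma main_ineq (n : ℕ) : ∀ m (p : ℕ → ℕ), Antitone p → p n = 0 → p 0 ≤ n → p 0 ≤ m →
    ∏ c ∈ cells p n, hookLen p n c ≤ ∏ c ∈ cells p n, hookOp c := by
  intro m
  induction m with
  | zero =>
    intro p hp hpn hp0n hp0
    have hempty : cells p n = ∅ := by
      ext c
      simp only [cells, Finset.mem_filter, Finset.mem_product, Finset.mem_range,
        Finset.notMem_empty, iff_false]
      rintro ⟨-, hc⟩
      have := hp (Nat.zero_le c.2)
      omega
    simp [hempty]
  | succ m ih =>
    intro p hp hpn hp0n hp0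
    by_cases h0 : p 0 = 0
    · have hempty : cells p n = ∅ := by
        ext c
        simp only [cells, Finset.mem_filter, Finset.mem_product, Finset.mem_range,
          Finset.notMem_empty, iff_false]
        rintro ⟨-, hc⟩
        have := hp (Nat.zero_le c.2)
        omega
      simp [hempty]
    -- setup
    set μ : ℕ → ℕ := fun b => p b - 1 with hμ
    have hμa : Antitone μ := fun i j hij => Nat.sub_le_sub_right (hp hij) 1
    have hμn : μ n = 0 := by simp [hμ, hpn]
    have hμ0 : μ 0 ≤ m := by simp [hμ]; omega
    have hμ0n : μ 0 ≤ n := by simp [hμ]; omega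
    have hple : ∀ b, p b ≤ n := fun b => le_trans (hp (Nat.zero_le b)) hp0n
    have hμle : ∀ b, μ b ≤ n := fun b => le_trans (Nat.sub_le _ _) (hple b)
    set q0 := conjP p n 0 with hq0
    -- membership fact: b < n ∧ 0 < p b ↔ b < q0
    have hmem : ∀ b, (b < n ∧ 0 < p b) ↔ b < q0 := by
      intro b
      have h := Finset.ext_iff.mp (filter_lt_eq_range p hp n 0) b
      simp only [Finset.mem_filter, Finset.mem_range] at h
      exact h
    -- conjP relations
    have hconj : ∀ a, conjP μ n a = conjP p n (a + 1) := by
      intro a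
      unfold conjP
      congr 1
      apply Finset.filter_congr
      intro b _
      simp only [hμ]
      constructor <;> intro <;> omega
    -- hook relation for shifted cells
    have hhook : ∀ a b, hookLen p n (a + 1, b) = hookLen μ n (a, b) := by
      intro a b
      have := hconj a
      simp only [hookLen, hμ] at this ⊢
      congr 1
      omega
    -- first column hooks
    have hfirst : ∀ b, b < n → 0 < p b → hookLen p n (0, b) = p b + (q0 - 1 - b) := by
      intro b hb hpb
      have hbq : b < q0 := (hmem b).1 ⟨hb, hpb⟩
      simp only [hookLen, Nat.sub_zero, ← hq0]
      omega
    -- identity for hookOp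
    have eqOp : ∏ c ∈ cells p n, hookOp c
        = (∏ c ∈ cells μ n, hookOp c) *
          ∏ b ∈ Finset.range n, (if 0 < p b then p b + b else 1) := by
      rw [prod_cells p n hple, prod_cells μ n hμle, ← Finset.prod_mul_distrib]
      refine Finset.prod_congr rfl fun b hb => ?_
      by_cases hpb : 0 < p b
      · rw [if_pos hpb]
        have hsucc : p b = μ b + 1 := by simp [hμ]; omega
        rw [hsucc, Finset.prod_range_succ]
        simp only [hookOp]
        congr 1
        omega
      · have : p b = 0 := by omega
        rw [if_neg hpb, this]
        have : μ b = 0 := by simp [hμ, this]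
        rw [this]
        simp
    -- identity for hookLen
    have eqHk : ∏ c ∈ cells p n, hookLen p n c
        = (∏ c ∈ cells μ n, hookLen μ n c) *
          ∏ b ∈ Finset.range n, (if 0 < p b then p b + (q0 - 1 - b) else 1) := by
      rw [prod_cells p n hple (hookLen p n), prod_cells μ n hμle (hookLen μ n),
        ← Finset.prod_mul_distrib]
      refine Finset.prod_congr rfl fun b hb => ?_
      simp only [Finset.mem_range] at hb
      by_cases hpb : 0 < p b
      · rw [if_pos hpb]
        have hsucc : p b = μ b + 1 := by simp [hμ]; omega
        rw [hsucc, Finset.prod_range_succ', hfirst b hb hpb]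
        congr 1
        · exact Finset.prod_congr rfl fun a _ => hhook a b
        · omega
      · have hz : p b = 0 := by omega
        rw [if_neg hpb, hz]
        have hz' : μ b = 0 := by simp [hμ, hz]
        rw [hz']
        simp
    -- core inequality
    have core : ∏ b ∈ Finset.range n, (if 0 < p b then p b + (q0 - 1 - b) else 1)
        ≤ ∏ b ∈ Finset.range n, (if 0 < p b then p b + b else 1) := by
      rw [← Finset.prod_filter, ← Finset.prod_filter]
      have hfeq : (Finset.range n).filter (fun b => 0 < p b) = Finset.range q0 :=
        filter_lt_eq_range p hp n 0
      rw [hfeq]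
      have hrefl := Finset.prod_range_reflect (fun j => p (q0 - 1 - j) + j) q0
      calc ∏ b ∈ Finset.range q0, (p b + (q0 - 1 - b))
          = ∏ b ∈ Finset.range q0, (p (q0 - 1 - (q0 - 1 - b)) + (q0 - 1 - b)) := by
            refine Finset.prod_congr rfl fun b hb => ?_
            simp only [Finset.mem_range] at hb
            congr 2
            omega
        _ = ∏ b ∈ Finset.range q0, (p (q0 - 1 - b) + b) := hrefl
        _ = ∏ b ∈ Finset.range q0, (0 + b + p (q0 - 1 - b)) := by
            refine Finset.prod_congr rfl fun b _ => by ring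
        _ ≤ ∏ b ∈ Finset.range q0, (0 + b + p b) := rev_le q0 p hp 0
        _ = ∏ b ∈ Finset.range q0, (p b + b) := by
            refine Finset.prod_congr rfl fun b _ => by ring
    -- assemble
    have ihμ := ih μ hμa hμn hμ0n hμ0
    calc ∏ c ∈ cells p n, hookLen p n c
        = (∏ c ∈ cells μ n, hookLen μ n c) *
          ∏ b ∈ Finset.range n, (if 0 < p b then p b + (q0 - 1 - b) else 1) := eqHk
      _ ≤ (∏ c ∈ cells μ n, hookOp c) *
          ∏ b ∈ Finset.range n, (if 0 < p b then p b + b else 1) := Nat.mul_le_mul ihμ core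
      _ = ∏ c ∈ cells p n, hookOp c := eqOp.symm

/-- The product of the opposite hook lengths of a partition is at least
the product of its hook lengths. -/
theorem prod_hookOp_ge_prod_hookLen (n : ℕ) (p : ℕ → ℕ) (hp : IsPartitionOf n p) :
    ∏ c ∈ cells p n, hookOp c ≥ ∏ c ∈ cells p n, hookLen p n c := by
  obtain ⟨hanti, hpn, hsum⟩ := hp
  have hp0n : p 0 ≤ n := by
    rcases Nat.eq_zero_or_pos n with rfl | hn
    · simp [hpn]
    · calc p 0 ≤ ∑ i ∈ Finset.range n, p i :=
          Finset.single_le_sum (fun i _ => Nat.zero_le (p i)) (Finset.mem_range.mpr hn)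
        _ = n := hsum
  exact main_ineq n (p 0) p hanti hpn hp0n le_rfl
end

section
/- For the Ramanujan sums c_j(s), defined as the sum of the s-th powers of the primitive j-th roots of unity, and for any positive integer n and any divisors s, r of n, we have ∑_{v | n} c_v(n/s) · c_r(n/v) = n if r = s, and 0 if r ≠ s. -/
open Finset Polynomial ArithmeticFunction in
private lemma sum_nthRoots_pow' (M m : ℕ) (hM : 0 < M) :
    ∑ z ∈ nthRootsFinset M (1 : ℂ), z ^ m = if M ∣ m then (M : ℂ) else 0 := by
  obtain ⟨x, hx⟩ : ∃ x : ℂ, IsPrimitiveRoot x M := ⟨_, Complex.isPrimitiveRoot_exp M hM.ne'⟩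
  split_ifs with h
  · rw [Finset.sum_congr rfl (fun z hz => ?_), Finset.sum_const, hx.card_nthRootsFinset,
      nsmul_eq_mul, mul_one]
    obtain ⟨k, rfl⟩ := h
    rw [pow_mul, (mem_nthRootsFinset hM 1).1 hz, one_pow]
  · have hxm : x ^ m ≠ 1 := fun hc => h (hx.dvd_of_pow_eq_one m hc)
    have key : x ^ m * ∑ z ∈ nthRootsFinset M (1 : ℂ), z ^ m = ∑ z ∈ nthRootsFinset M (1 : ℂ), z ^ m := by
      rw [Finset.mul_sum]
      refine Finset.sum_nbij' (fun z => x * z) (fun z => x ^ (M - 1) * z) ?_ ?_ ?_ ?_ ?_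
      · intro z hz
        have := mul_mem_nthRootsFinset (hx.mem_nthRootsFinset hM) hz
        rwa [one_mul] at this
      · intro z hz
        rw [← one_mul (1 : ℂ)]
        refine mul_mem_nthRootsFinset ?_ hz
        rw [mem_nthRootsFinset hM, ← pow_mul, mul_comm, pow_mul, hx.pow_eq_one, one_pow]
      · intro z hz
        show x ^ (M - 1) * (x * z) = z
        rw [← mul_assoc, ← pow_succ, Nat.sub_add_cancel hM, hx.pow_eq_one, one_mul]
      · intro z hz
        show x * (x ^ (M - 1) * z) = z
        rw [← mul_assoc, ← pow_succ', Nat.sub_add_cancel hM, hx.pow_eq_one, one_mul]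
      · intro z hz
        show x ^ m * z ^ m = (x * z) ^ m
        rw [mul_pow]
    have h2 : (∑ z ∈ nthRootsFinset M (1 : ℂ), z ^ m) * (x ^ m - 1) = 0 := by
      rw [mul_sub, mul_one, mul_comm, key, sub_self]
    rcases mul_eq_zero.1 h2 with h3 | h3
    · exact h3
    · exact absurd (by linear_combination h3) hxm

/-- The Ramanujan sum `c_j(s)`: the sum of the `s`-th powers of the primitive
`j`-th roots of unity (in `ℂ`). -/
noncomputable def ramanujanSum (j : ℕ) (s : ℤ) : ℂ :=
  ∑ ζ ∈ primitiveRoots j ℂ, ζ ^ s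

open Finset Polynomial ArithmeticFunction ArithmeticFunction.Moebius

private lemma ramanujanSum_natCast (j m : ℕ) :
    ramanujanSum j (m : ℤ) = ∑ z ∈ primitiveRoots j ℂ, z ^ m :=
  Finset.sum_congr rfl fun z _ => zpow_natCast z m

private lemma sum_ramanujanSum_divisors (M m : ℕ) (hM : 0 < M) :
    ∑ v ∈ M.divisors, ramanujanSum v (m : ℤ) = if M ∣ m then (M : ℂ) else 0 := by
  obtain ⟨x, hx⟩ : ∃ x : ℂ, IsPrimitiveRoot x M := ⟨_, Complex.isPrimitiveRoot_exp M hM.ne'⟩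
  rw [← sum_nthRoots_pow' M m hM, IsPrimitiveRoot.nthRoots_one_eq_biUnion_primitiveRoots,
    Finset.sum_biUnion]
  · exact Finset.sum_congr rfl fun v _ => (ramanujanSum_natCast v m)
  · intro i _ j _ hij
    exact IsPrimitiveRoot.disjoint hij

private lemma ramanujanSum_eq_sum_moebius (r m : ℕ) (hr : 0 < r) :
    ramanujanSum r (m : ℤ) =
      ∑ e ∈ r.divisors, (μ (r / e) : ℂ) * (if e ∣ m then (e : ℂ) else 0) := by
  have key := (sum_eq_iff_sum_mul_moebius_eq (R := ℂ)
    (f := fun v => ramanujanSum v (m : ℤ))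
    (g := fun M => if M ∣ m then (M : ℂ) else 0)).1
    (fun M hM => sum_ramanujanSum_divisors M m hM) r hr
  rw [← key, ← Nat.sum_divisorsAntidiagonal' (fun a b => (μ a : ℂ) * (if b ∣ m then (b:ℂ) else 0))]

private lemma sum_moebius_divisors (k : ℕ) :
    ∑ d ∈ k.divisors, μ d = if k = 1 then 1 else 0 := by
  have h := moebius_mul_coe_zeta
  rw [ArithmeticFunction.ext_iff] at h
  have hk := h k
  rwa [coe_mul_zeta_apply, one_apply] at hk

private lemma filter_moebius_sum (s r : ℕ) (hs : 0 < s) (hr : 0 < r) :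
    ∑ e ∈ r.divisors.filter (fun e => s ∣ e), (μ (r / e) : ℂ) =
      if r = s then 1 else 0 := by
  by_cases hsr : s ∣ r
  · obtain ⟨t, rfl⟩ := hsr
    have ht : t ≠ 0 := by rintro rfl; simp at hr
    have key : ∑ e ∈ (s*t).divisors.filter (fun e => s ∣ e), (μ ((s*t) / e) : ℂ) =
        ∑ g ∈ t.divisors, (μ (t / g) : ℂ) := by
      refine Finset.sum_nbij' (fun e => e / s) (fun g => s * g) ?_ ?_ ?_ ?_ ?_
      · intro e he
        simp only [Finset.mem_filter, Nat.mem_divisors] at he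
        obtain ⟨⟨hd, hne⟩, hse⟩ := he
        rw [Nat.mem_divisors]
        refine ⟨?_, ht⟩
        have : s * (e / s) ∣ s * t := by rwa [Nat.mul_div_cancel' hse]
        exact (mul_dvd_mul_iff_left hs.ne').1 this
      · intro g hg
        rw [Nat.mem_divisors] at hg
        simp only [Finset.mem_filter, Nat.mem_divisors]
        exact ⟨⟨mul_dvd_mul_left s hg.1, by positivity⟩, dvd_mul_right s g⟩
      · intro e he
        simp only [Finset.mem_filter] at he
        exact Nat.mul_div_cancel' he.2
      · intro g hg
        exact Nat.mul_div_cancel_left g hs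
      · intro e he
        simp only [Finset.mem_filter] at he
        congr 1
        conv_lhs => rw [← Nat.mul_div_cancel' he.2]
        rw [Nat.mul_div_mul_left _ _ hs]
    rw [key, Nat.sum_div_divisors t (fun g => (μ g : ℂ))]
    have hc : (∑ g ∈ t.divisors, (μ g : ℂ)) = ((∑ g ∈ t.divisors, μ g : ℤ) : ℂ) := by
      push_cast; ring
    rw [hc, sum_moebius_divisors]
    have hiff : s * t = s ↔ t = 1 := by
      constructor
      · intro h; exact Nat.eq_of_mul_eq_mul_left hs (h.trans (Nat.mul_one s).symm)
      · rintro rfl; exact Nat.mul_one s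
    by_cases h1 : t = 1 <;> simp [h1, hiff]
  · rw [Finset.filter_false_of_mem, Finset.sum_empty]
    · rw [if_neg]; rintro rfl; exact hsr dvd_rfl
    · intro e he hse
      exact hsr (hse.trans (Nat.mem_divisors.1 he).1)

private lemma div_dvd_div_iff' (n s e : ℕ) (hn : 0 < n) (hs : s ∣ n) (he : e ∣ n) :
    n / e ∣ n / s ↔ s ∣ e := by
  have hne : 0 < n / e := Nat.div_pos (Nat.le_of_dvd hn he) (Nat.pos_of_dvd_of_pos he hn)
  rw [Nat.dvd_div_iff_mul_dvd hs]
  constructor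
  · intro h
    have h2 : s * (n / e) ∣ e * (n / e) := by rwa [Nat.mul_div_cancel' he]
    rw [mul_comm s _, mul_comm e _] at h2
    exact (Nat.mul_dvd_mul_iff_left hne).1 h2
  · intro hse
    have h2 : s * (n / e) ∣ e * (n / e) := mul_dvd_mul_right hse (n / e)
    rwa [Nat.mul_div_cancel' he] at h2

private lemma divisors_filter_eq (n e : ℕ) (hn : 0 < n) (he : e ∣ n) :
    n.divisors.filter (fun v => e ∣ n / v) = (n / e).divisors := by
  have hne : n / e ≠ 0 := (Nat.div_pos (Nat.le_of_dvd hn he) (Nat.pos_of_dvd_of_pos he hn)).ne'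
  ext v
  simp only [Finset.mem_filter, Nat.mem_divisors, hn.ne', hne, ne_eq, not_false_eq_true,
    and_true]
  constructor
  · rintro ⟨hv, hev⟩
    rw [Nat.dvd_div_iff_mul_dvd he, mul_comm]
    exact (Nat.dvd_div_iff_mul_dvd hv).1 hev
  · intro hv
    have h1 : e * v ∣ n := (Nat.dvd_div_iff_mul_dvd he).1 hv
    refine ⟨(dvd_mul_left v e).trans h1, ?_⟩
    rw [Nat.dvd_div_iff_mul_dvd ((dvd_mul_left v e).trans h1), mul_comm]
    exact h1

/-- Orthogonality of Ramanujan sums: for divisors `s, r` of `n`,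
`∑_{v ∣ n} c_v(n/s) c_r(n/v)` is `n` if `r = s` and `0` otherwise. -/
theorem ramanujanSum_orthogonality (n s r : ℕ) (hn : 0 < n) (hs : s ∣ n) (hr : r ∣ n) :
    ∑ v ∈ n.divisors, ramanujanSum v ((n / s : ℕ) : ℤ) * ramanujanSum r ((n / v : ℕ) : ℤ) =
      if r = s then (n : ℂ) else 0 := by
  have hs0 : 0 < s := Nat.pos_of_dvd_of_pos hs hn
  have hr0 : 0 < r := Nat.pos_of_dvd_of_pos hr hn
  have step1 : ∑ v ∈ n.divisors, ramanujanSum v ((n / s : ℕ) : ℤ) *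
      ramanujanSum r ((n / v : ℕ) : ℤ) =
      ∑ e ∈ r.divisors, ∑ v ∈ n.divisors,
        (μ (r / e) : ℂ) * (if e ∣ n / v then (e : ℂ) * ramanujanSum v ((n / s : ℕ) : ℤ) else 0) := by
    rw [Finset.sum_comm]
    refine Finset.sum_congr rfl fun v _ => ?_
    rw [ramanujanSum_eq_sum_moebius r (n / v) hr0, Finset.mul_sum]
    refine Finset.sum_congr rfl fun e _ => ?_
    split_ifs with h <;> ring
  rw [step1]
  have step2 : ∀ e ∈ r.divisors,
      ∑ v ∈ n.divisors, (μ (r / e) : ℂ) *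
        (if e ∣ n / v then (e : ℂ) * ramanujanSum v ((n / s : ℕ) : ℤ) else 0) =
      (μ (r / e) : ℂ) * (if s ∣ e then (n : ℂ) else 0) := by
    intro e he
    have hen : e ∣ n := (Nat.mem_divisors.1 he).1.trans hr
    rw [← Finset.mul_sum]
    congr 1
    rw [← Finset.sum_filter, divisors_filter_eq n e hn hen, ← Finset.mul_sum,
      sum_ramanujanSum_divisors (n / e) (n / s) (Nat.div_pos (Nat.le_of_dvd hn hen)
        (Nat.pos_of_dvd_of_pos hen hn))]
    by_cases h : s ∣ e
    · rw [if_pos ((div_dvd_div_iff' n s e hn hs hen).2 h), if_pos h, ← Nat.cast_mul,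
        Nat.mul_div_cancel' hen]
    · rw [if_neg (fun hc => h ((div_dvd_div_iff' n s e hn hs hen).1 hc)), if_neg h, mul_zero]
  rw [Finset.sum_congr rfl step2]
  have step3 : ∑ e ∈ r.divisors, (μ (r / e) : ℂ) * (if s ∣ e then (n : ℂ) else 0) =
      (n : ℂ) * ∑ e ∈ r.divisors.filter (fun e => s ∣ e), (μ (r / e) : ℂ) := by
    rw [Finset.sum_filter, Finset.mul_sum]
    refine Finset.sum_congr rfl fun e _ => ?_
    split_ifs with h <;> ring
  rw [step3, filter_moebius_sum s r hs0 hr0]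
  split_ifs <;> simp
end

section
/- Let λ be a partition of n ≥ 1 and let N(λ) = n - max_{c∈λ} h_c^op be its diagonal excess. Set N = N(λ) if 2N(λ)+1 ≤ n and N = ⌊(n-1)/2⌋ otherwise. Then for every i ≥ 1, the number of cells c ∈ λ with h_c^op ≥ i is at most the number of cells d in the hook (n-N, 1^N) with h_d^op ≥ i. -/
open Finset

section Helpers

variable {p : ℕ → ℕ} {n : ℕ}

lemma row_lt_of_pos (hp : IsPartitionOf n p) {b : ℕ} (hb : 1 ≤ p b) : b < n := by
  by_contra h
  have h2 : p b ≤ p n := hp.1 (Nat.le_of_not_lt h)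
  have h3 := hp.2.1
  omega

lemma part_le (hp : IsPartitionOf n p) (hn : 1 ≤ n) (b : ℕ) : p b ≤ n := by
  have h1 : p b ≤ p 0 := hp.1 (Nat.zero_le b)
  have h2 : p 0 ≤ ∑ i ∈ Finset.range n, p i :=
    Finset.single_le_sum (fun i _ => Nat.zero_le (p i)) (Finset.mem_range.mpr hn)
  have h3 := hp.2.2
  omega

lemma mem_cells (hp : IsPartitionOf n p) (hn : 1 ≤ n) {c : ℕ × ℕ} :
    c ∈ cells p n ↔ c.1 < p c.2 := by
  simp only [cells, Finset.mem_filter, Finset.mem_product, Finset.mem_range]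
  constructor
  · tauto
  · intro h
    have h1 : c.2 < n := row_lt_of_pos hp (by omega)
    have h2 : p c.2 ≤ n := part_le hp hn c.2
    exact ⟨⟨by omega, h1⟩, h⟩

lemma p0_pos (hp : IsPartitionOf n p) (hn : 1 ≤ n) : 1 ≤ p 0 := by
  by_contra h
  have h1 : ∑ i ∈ Finset.range n, p i = 0 :=
    Finset.sum_eq_zero fun i _ => by have := hp.1 (Nat.zero_le i); omega
  have := hp.2.2
  omega

lemma cells_zero_mem (hp : IsPartitionOf n p) (hn : 1 ≤ n) : ((0, 0) : ℕ × ℕ) ∈ cells p n :=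
  (mem_cells hp hn).mpr (p0_pos hp hn)

lemma count_stair (hp : IsPartitionOf n p) (hn : 1 ≤ n) (k : ℕ) :
    ((cells p n).filter fun c => hookOp c ≤ k + 1).card
      = ∑ b ∈ Finset.range n, min (p b) (k + 1 - b) := by
  rw [Finset.card_eq_sum_card_fiberwise (f := Prod.snd) (t := Finset.range n)
      (fun c hc => by
        have h := (Finset.mem_filter.mp hc).1
        simp only [cells, Finset.mem_filter, Finset.mem_product, Finset.mem_range] at h
        exact Finset.mem_range.mpr h.1.2)]
  refine Finset.sum_congr rfl fun b hb => ?_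
  have he : (((cells p n).filter fun c => hookOp c ≤ k + 1).filter fun c => c.2 = b)
      = (Finset.range (min (p b) (k + 1 - b))).image fun a => (a, b) := by
    ext ⟨x, y⟩
    rw [Finset.mem_filter, Finset.mem_filter]
    simp only [Finset.mem_filter, Finset.mem_image, Finset.mem_range,
      mem_cells hp hn, hookOp, Prod.mk.injEq]
    constructor
    · rintro ⟨⟨h1, h2⟩, rfl⟩
      exact ⟨x, by omega, rfl, rfl⟩
    · rintro ⟨a, ha, rfl, rfl⟩
      exact ⟨⟨by omega, by omega⟩, rfl⟩
  rw [he, Finset.card_image_of_injective _ (fun a a' h => by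
    simpa using congrArg Prod.fst h), Finset.card_range]

lemma cells_card (hp : IsPartitionOf n p) (hn : 1 ≤ n) : (cells p n).card = n := by
  have h1 : (cells p n).filter (fun c => hookOp c ≤ 2 * n + 1) = cells p n := by
    apply Finset.filter_true_of_mem
    intro c hc
    simp only [cells, Finset.mem_filter, Finset.mem_product, Finset.mem_range] at hc
    simp only [hookOp]
    omega
  have h2 := count_stair hp hn (2 * n)
  rw [h1] at h2
  rw [h2]
  have h3 : ∀ b ∈ Finset.range n, min (p b) (2 * n + 1 - b) = p b := by
    intro b hb
    have := part_le hp hn b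
    simp only [Finset.mem_range] at hb
    omega
  rw [Finset.sum_congr rfl h3, hp.2.2]

lemma lt_conj_iff (hp : IsPartitionOf n p) {a b : ℕ} :
    b < conjP p n a ↔ a < p b := by
  constructor
  · intro h
    by_contra h'
    push_neg at h'
    have hsub : (Finset.range n).filter (fun b' => a < p b') ⊆ Finset.range b := by
      intro b' hb'
      simp only [Finset.mem_filter, Finset.mem_range] at *
      by_contra h3
      have := hp.1 (Nat.le_of_not_lt (by omega : ¬ b' < b))
      omega
    have := Finset.card_le_card hsub
    simp only [conjP] at h
    rw [Finset.card_range] at this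
    omega
  · intro h
    have hbn : b < n := row_lt_of_pos hp (by omega)
    have hsub : Finset.range (b + 1) ⊆ (Finset.range n).filter fun b' => a < p b' := by
      intro b' hb'
      simp only [Finset.mem_range, Finset.mem_filter] at *
      have h2 : p b ≤ p b' := hp.1 (by omega)
      exact ⟨by omega, by omega⟩
    have := Finset.card_le_card hsub
    simp only [conjP]
    rw [Finset.card_range] at this
    omega

lemma conj_isPartitionOf (hp : IsPartitionOf n p) (hn : 1 ≤ n) :
    IsPartitionOf n (conjP p n) := by
  refine ⟨?_, ?_, ?_⟩
  · intro a a' h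
    apply Finset.card_le_card
    intro b hb
    simp only [Finset.mem_filter] at *
    exact ⟨hb.1, by omega⟩
  · simp only [conjP]
    have h : ∀ b ∈ Finset.range n, ¬ n < p b := fun b _ => not_lt.mpr (part_le hp hn b)
    rw [Finset.filter_false_of_mem h, Finset.card_empty]
  · calc ∑ a ∈ Finset.range n, conjP p n a
        = ∑ a ∈ Finset.range n, ∑ b ∈ Finset.range n, (if a < p b then 1 else 0) := by
          refine Finset.sum_congr rfl fun a _ => ?_
          rw [conjP, Finset.card_filter]
      _ = ∑ b ∈ Finset.range n, ∑ a ∈ Finset.range n, (if a < p b then 1 else 0) :=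
          Finset.sum_comm
      _ = ∑ b ∈ Finset.range n, p b := by
          refine Finset.sum_congr rfl fun b hb => ?_
          rw [← Finset.card_filter]
          have h : (Finset.range n).filter (fun a => a < p b) = Finset.range (p b) := by
            ext a
            simp only [Finset.mem_filter, Finset.mem_range]
            have := part_le hp hn b
            omega
          rw [h, Finset.card_range]
      _ = n := hp.2.2

lemma conj_filter_card (hp : IsPartitionOf n p) (hn : 1 ≤ n) (k : ℕ) :
    ((cells (conjP p n) n).filter fun c => hookOp c ≤ k + 1).card
      = ((cells p n).filter fun c => hookOp c ≤ k + 1).card := by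
  have hq := conj_isPartitionOf hp hn
  refine Finset.card_bij' (fun c _ => c.swap) (fun c _ => c.swap) ?_ ?_ ?_ ?_
  · intro c hc
    obtain ⟨h1, h2⟩ := Finset.mem_filter.mp hc
    rw [mem_cells hq hn] at h1
    refine Finset.mem_filter.mpr ⟨(mem_cells hp hn).mpr ?_, ?_⟩
    · simpa using (lt_conj_iff hp).mp h1
    · simp only [hookOp, Prod.fst_swap, Prod.snd_swap] at h2 ⊢
      omega
  · intro c hc
    obtain ⟨h1, h2⟩ := Finset.mem_filter.mp hc
    rw [mem_cells hp hn] at h1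
    refine Finset.mem_filter.mpr ⟨(mem_cells hq hn).mpr ?_, ?_⟩
    · simpa using (lt_conj_iff hp).mpr h1
    · simp only [hookOp, Prod.fst_swap, Prod.snd_swap] at h2 ⊢
      omega
  · intro c _; simp
  · intro c _; simp

lemma row_hook_le_sup (hp : IsPartitionOf n p) (hn : 1 ≤ n) {b : ℕ} (hb : 1 ≤ p b) :
    p b + b ≤ (cells p n).sup hookOp := by
  have hc : (p b - 1, b) ∈ cells p n := (mem_cells hp hn).mpr (by simp; omega)
  have := Finset.le_sup (f := hookOp) hc
  simp only [hookOp] at this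
  omega

lemma sup_attained (hp : IsPartitionOf n p) (hn : 1 ≤ n) :
    ∃ c ∈ cells p n, hookOp c = (cells p n).sup hookOp := by
  obtain ⟨c, hc, h⟩ := Finset.exists_mem_eq_sup (cells p n) ⟨(0, 0), cells_zero_mem hp hn⟩ hookOp
  exact ⟨c, hc, h.symm⟩

lemma row_hook_ex (hp : IsPartitionOf n p) (hn : 1 ≤ n) :
    ∃ b, 1 ≤ p b ∧ p b + b = (cells p n).sup hookOp := by
  obtain ⟨c, hc, hceq⟩ := sup_attained hp hn
  have h1 : c.1 < p c.2 := (mem_cells hp hn).mp hc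
  have h2 := row_hook_le_sup hp hn (b := c.2) (by omega)
  simp only [hookOp] at hceq
  exact ⟨c.2, by omega, by omega⟩

lemma conj_hook_le_sup (hp : IsPartitionOf n p) (hn : 1 ≤ n) {a : ℕ}
    (ha : 1 ≤ conjP p n a) : conjP p n a + a ≤ (cells p n).sup hookOp := by
  have h1 : a < p (conjP p n a - 1) := (lt_conj_iff hp).mp (by omega)
  have hc : (a, conjP p n a - 1) ∈ cells p n := (mem_cells hp hn).mpr h1
  have := Finset.le_sup (f := hookOp) hc
  simp only [hookOp] at this
  omega

lemma conj_hook_ex (hp : IsPartitionOf n p) (hn : 1 ≤ n) :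
    ∃ a, 1 ≤ conjP p n a ∧ conjP p n a + a = (cells p n).sup hookOp := by
  obtain ⟨c, hc, hceq⟩ := sup_attained hp hn
  have h1 : c.1 < p c.2 := (mem_cells hp hn).mp hc
  have h2 : c.2 < conjP p n c.1 := (lt_conj_iff hp).mpr h1
  have h3 := conj_hook_le_sup hp hn (a := c.1) (by omega)
  simp only [hookOp] at hceq
  exact ⟨c.1, by omega, by omega⟩

lemma sup_le_n (hp : IsPartitionOf n p) (hn : 1 ≤ n) : (cells p n).sup hookOp ≤ n := by
  obtain ⟨b, hb1, hb2⟩ := row_hook_ex hp hn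
  have hbn : b < n := row_lt_of_pos hp hb1
  have h1 : ∑ i ∈ Finset.range (b + 1), p i ≤ ∑ i ∈ Finset.range n, p i :=
    Finset.sum_le_sum_of_subset (Finset.range_subset_range.mpr (by omega))
  rw [Finset.sum_range_succ] at h1
  have h2 : (Finset.range b).card • 1 ≤ ∑ i ∈ Finset.range b, p i :=
    Finset.card_nsmul_le_sum _ _ _ (fun i hi => by
      have := hp.1 (le_of_lt (Finset.mem_range.mp hi))
      omega)
  rw [Finset.card_range, smul_eq_mul] at h2
  have h3 := hp.2.2
  omega

lemma diag_cell (hp : IsPartitionOf n p) (hn : 1 ≤ n) {m : ℕ}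
    (hm : m < (cells p n).sup hookOp) :
    ∃ c ∈ cells p n, hookOp c = m + 1 := by
  obtain ⟨c, hc, hceq⟩ := sup_attained hp hn
  have h1 : c.1 < p c.2 := (mem_cells hp hn).mp hc
  simp only [hookOp] at hceq
  by_cases h : m ≤ c.1
  · refine ⟨(m, 0), (mem_cells hp hn).mpr ?_, by simp [hookOp]⟩
    have : p c.2 ≤ p 0 := hp.1 (Nat.zero_le _)
    simp only []
    omega
  · refine ⟨(c.1, m - c.1), (mem_cells hp hn).mpr ?_, by simp [hookOp]; omega⟩
    have h2 : m - c.1 ≤ c.2 := by omega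
    have := hp.1 h2
    simp only []
    omega

lemma stair_step (hp : IsPartitionOf n p) (hn : 1 ≤ n) (k : ℕ)
    (h : k + 2 ≤ (cells p n).sup hookOp) :
    ((cells p n).filter fun c => hookOp c ≤ k + 1).card + 1
      ≤ ((cells p n).filter fun c => hookOp c ≤ k + 1 + 1).card := by
  obtain ⟨c, hc, hceq⟩ := diag_cell hp hn (m := k + 1) (by omega)
  have hnot : c ∉ (cells p n).filter fun c => hookOp c ≤ k + 1 := by
    simp only [Finset.mem_filter, not_and]
    intro _
    omega
  have hsub : insert c ((cells p n).filter fun c => hookOp c ≤ k + 1)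
      ⊆ (cells p n).filter fun c => hookOp c ≤ k + 1 + 1 := by
    intro x hx
    rcases Finset.mem_insert.mp hx with rfl | hx
    · exact Finset.mem_filter.mpr ⟨hc, by omega⟩
    · have := Finset.mem_filter.mp hx
      exact Finset.mem_filter.mpr ⟨this.1, by omega⟩
  have := Finset.card_le_card hsub
  rwa [Finset.card_insert_of_notMem hnot] at this

end Helpers

lemma arith1 (w v : ℕ) : 2 * (w + 3 + v) ≤ (w + 2) * (v + 3) := by nlinarith

lemma arith2 (w v : ℕ) : 2 * (w + 4 + v) + 1 ≤ (v + 3) + (w + 2) * (v + 3) := by nlinarith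

/-- The key combinatorial lemma, in row-sum form, for a partition whose number of
nonzero rows is at most `k` (expressed via `p k = 0`). -/
lemma core_row (p : ℕ → ℕ) (n M k : ℕ) (hmono : Antitone p)
    (hsum : ∑ b ∈ Finset.range n, p b = n)
    (hM : ∀ b, 1 ≤ p b → p b + b ≤ M)
    (hMex : ∃ b, 1 ≤ p b ∧ p b + b = M)
    (hMk : k + 1 ≤ M) (hnk : M + k ≤ n) (hck : p k = 0) :
    2 * k + 1 ≤ ∑ b ∈ Finset.range n, min (p b) (k + 1 - b) := by
  have hrow : ∀ b, 1 ≤ p b → b < k := by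
    intro b hb
    by_contra h
    have := hmono (Nat.le_of_not_lt h)
    omega
  obtain ⟨B, hB1, hB2⟩ := hMex
  have hBk : B < k := hrow B hB1
  have hkn : 2 * k + 1 ≤ n := by omega
  -- the largest "long" row
  obtain ⟨b1, hb1k, hb1long, hb1pos, hmax⟩ :
      ∃ b1, b1 < k ∧ (k + 1 - b1 ≤ p b1) ∧ 1 ≤ p b1 ∧
        ∀ b, k + 1 - b ≤ p b → 1 ≤ p b → b ≤ b1 := by
    set Ls := (Finset.range k).filter (fun b => k + 1 - b ≤ p b ∧ 1 ≤ p b) with hLs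
    have hBmem : B ∈ Ls := by
      simp only [hLs, Finset.mem_filter, Finset.mem_range]
      exact ⟨hBk, by omega, hB1⟩
    have hne : Ls.Nonempty := ⟨B, hBmem⟩
    have hb1 := Ls.max'_mem hne
    simp only [hLs, Finset.mem_filter, Finset.mem_range] at hb1
    refine ⟨Ls.max' hne, hb1.1, hb1.2.1, hb1.2.2, fun b h1 h2 => ?_⟩
    exact Finset.le_max' Ls b (by
      simp only [hLs, Finset.mem_filter, Finset.mem_range]
      exact ⟨hrow b h2, h1, h2⟩)
  have hshort : ∀ b, b1 < b → min (p b) (k + 1 - b) = p b := by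
    intro b hb
    rcases Nat.eq_zero_or_pos (p b) with h | h
    · simp [h]
    · have h3 : ¬ (k + 1 - b ≤ p b) := fun hcon => by have := hmax b hcon h; omega
      omega
  have hb1n : b1 + 1 ≤ n := by omega
  have hsplitS : ∑ b ∈ Finset.range n, min (p b) (k + 1 - b)
      = ∑ b ∈ Finset.range (b1 + 1), min (p b) (k + 1 - b)
        + ∑ b ∈ Finset.Ico (b1 + 1) n, p b := by
    have h := Finset.sum_Ico_consecutive (fun b => min (p b) (k + 1 - b))
      (Nat.zero_le (b1 + 1)) hb1n
    rw [Finset.range_eq_Ico, ← h, ← Finset.range_eq_Ico]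
    congr 1
    exact Finset.sum_congr rfl fun b hb => hshort b (Finset.mem_Ico.mp hb).1
  have hsplitn : ∑ b ∈ Finset.range (b1 + 1), p b + ∑ b ∈ Finset.Ico (b1 + 1) n, p b = n := by
    have h := Finset.sum_Ico_consecutive p (Nat.zero_le (b1 + 1)) hb1n
    rw [← Finset.range_eq_Ico] at h
    rw [Finset.range_eq_Ico] at h ⊢
    rw [h]
    rw [← Finset.range_eq_Ico]
    exact hsum
  rw [hsplitS]
  rcases Nat.eq_zero_or_pos b1 with hb10 | hb1p
  · -- Case A : the only long row is row 0
    subst hb10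
    simp only [zero_add, Finset.sum_range_one] at hsplitn ⊢
    have hp0M : p 0 + 0 ≤ M := hM 0 hb1pos
    omega
  by_cases hnext : 1 ≤ p (b1 + 1)
  · -- Case B : there is a nonzero row after the last long row
    have hb1k' : b1 + 1 < k := hrow _ hnext
    have hfirst : (b1 + 1) * (k + 1 - b1)
        ≤ ∑ b ∈ Finset.range (b1 + 1), min (p b) (k + 1 - b) := by
      have h := Finset.card_nsmul_le_sum (Finset.range (b1 + 1))
        (fun b => min (p b) (k + 1 - b)) (k + 1 - b1) (fun b hb => by
          have hble : b ≤ b1 := by have := Finset.mem_range.mp hb; omega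
          have h1 : p b1 ≤ p b := hmono hble
          show k + 1 - b1 ≤ min (p b) (k + 1 - b)
          omega)
      rwa [Finset.card_range, smul_eq_mul] at h
    have hTpos : 1 ≤ ∑ b ∈ Finset.Ico (b1 + 1) n, p b :=
      le_trans hnext (Finset.single_le_sum (fun i _ => Nat.zero_le (p i))
        (Finset.mem_Ico.mpr ⟨le_refl _, by omega⟩))
    have h2k : 2 * k ≤ (b1 + 1) * (k + 1 - b1) := by
      obtain ⟨w, hw⟩ : ∃ w, b1 = w + 1 := ⟨b1 - 1, by omega⟩
      obtain ⟨v, hv⟩ : ∃ v, k = b1 + 2 + v := ⟨k - b1 - 2, by omega⟩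
      have e : k + 1 - b1 = v + 3 := by omega
      calc 2 * k = 2 * (w + 3 + v) := by omega
        _ ≤ (w + 2) * (v + 3) := arith1 w v
        _ = (b1 + 1) * (k + 1 - b1) := by rw [e, hw]
    have hcomb : 2 * k ≤ ∑ b ∈ Finset.range (b1 + 1), min (p b) (k + 1 - b) :=
      le_trans h2k hfirst
    omega
  · -- Case C : the last long row is the last nonzero row
    have hp0next : p (b1 + 1) = 0 := by omega
    have hT0 : ∑ b ∈ Finset.Ico (b1 + 1) n, p b = 0 :=
      Finset.sum_eq_zero fun b hb => by
        have := hmono (show b1 + 1 ≤ b from (Finset.mem_Ico.mp hb).1)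
        omega
    have hsumc : ∑ b ∈ Finset.range (b1 + 1), p b = n := by omega
    have hfirst : min (p 0) (k + 1) + b1 * (k + 1 - b1)
        ≤ ∑ b ∈ Finset.range (b1 + 1), min (p b) (k + 1 - b) := by
      rw [Finset.sum_range_succ' (fun b => min (p b) (k + 1 - b)) b1]
      have hbd : b1 * (k + 1 - b1)
          ≤ ∑ i ∈ Finset.range b1, min (p (i + 1)) (k + 1 - (i + 1)) := by
        have h := Finset.card_nsmul_le_sum (Finset.range b1)
          (fun i => min (p (i + 1)) (k + 1 - (i + 1))) (k + 1 - b1) (fun i hi => by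
            have hib : i + 1 ≤ b1 := by have := Finset.mem_range.mp hi; omega
            have h1 : p b1 ≤ p (i + 1) := hmono hib
            show k + 1 - b1 ≤ min (p (i + 1)) (k + 1 - (i + 1))
            omega)
        rwa [Finset.card_range, smul_eq_mul] at h
      have he : min (p 0) (k + 1 - 0) = min (p 0) (k + 1) := by norm_num
      omega
    have hMb1 : p b1 + b1 ≤ M := hM b1 hb1pos
    rcases (show b1 = 1 ∨ b1 + 1 = k ∨ (2 ≤ b1 ∧ b1 + 2 ≤ k) by omega) with h | h | h
    · -- two nonzero rows
      subst h
      have h1 : p 0 + p 1 = n := by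
        rw [← hsumc]
        rw [Finset.sum_range_succ, Finset.sum_range_one]
      have hp0 : k + 1 ≤ p 0 := by omega
      have hm1 : min (p 0) (k + 1) = k + 1 := by omega
      omega
    · -- k nonzero rows
      have hLk : k + 1 - b1 = 2 := by omega
      have hp03 : 3 ≤ p 0 := by
        by_contra hp0
        have h2 : n ≤ (b1 + 1) * p 0 := by
          rw [← hsumc]
          have h := Finset.sum_le_card_nsmul (Finset.range (b1 + 1)) p (p 0)
            (fun b _ => hmono (Nat.zero_le b))
          rwa [Finset.card_range, smul_eq_mul] at h
        have h3 : (b1 + 1) * p 0 ≤ (b1 + 1) * 2 := Nat.mul_le_mul_left _ (by omega)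
        have h23 : n ≤ (b1 + 1) * 2 := le_trans h2 h3
        omega
      have hm1 : 3 ≤ min (p 0) (k + 1) := by omega
      rw [hLk] at hfirst
      omega
    · -- between 3 and k-1 nonzero rows
      have h1 : p b1 ≤ p 0 := hmono (Nat.zero_le b1)
      have hm1 : k + 1 - b1 ≤ min (p 0) (k + 1) := by omega
      have h2k : 2 * k + 1 ≤ (k + 1 - b1) + b1 * (k + 1 - b1) := by
        obtain ⟨w, hw⟩ : ∃ w, b1 = w + 2 := ⟨b1 - 2, by omega⟩
        obtain ⟨v, hv⟩ : ∃ v, k = b1 + 2 + v := ⟨k - b1 - 2, by omega⟩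
        have e : k + 1 - b1 = v + 3 := by omega
        calc 2 * k + 1 = 2 * (w + 4 + v) + 1 := by omega
          _ ≤ (v + 3) + (w + 2) * (v + 3) := arith2 w v
          _ = (k + 1 - b1) + b1 * (k + 1 - b1) := by rw [e, hw]
      have hcomb : 2 * k + 1 ≤ ∑ b ∈ Finset.range (b1 + 1), min (p b) (k + 1 - b) :=
        le_trans (le_trans h2k (Nat.add_le_add_right hm1 _)) hfirst
      omega

/-- The staircase bound: if `k + 1 ≤ M` and `M + k ≤ n` then the staircase of
size `k` inside `λ` contains at least `2k+1` cells. -/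
lemma core {p : ℕ → ℕ} {n : ℕ} (hp : IsPartitionOf n p) (hn : 1 ≤ n) (k : ℕ)
    (hMk : k + 1 ≤ (cells p n).sup hookOp)
    (hnk : (cells p n).sup hookOp + k ≤ n) :
    2 * k + 1 ≤ ((cells p n).filter fun c => hookOp c ≤ k + 1).card := by
  by_cases hpk : p k = 0
  · rw [count_stair hp hn]
    exact core_row p n _ k hp.1 hp.2.2 (fun b hb => row_hook_le_sup hp hn hb)
      (row_hook_ex hp hn) hMk hnk hpk
  · by_cases hqk : conjP p n k = 0
    · have hq := conj_isPartitionOf hp hn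
      rw [← conj_filter_card hp hn k, count_stair hq hn]
      exact core_row (conjP p n) n _ k hq.1 hq.2.2
        (fun a ha => conj_hook_le_sup hp hn ha) (conj_hook_ex hp hn) hMk hnk hqk
    · rw [count_stair hp hn]
      have hkn : k + 1 ≤ n := by omega
      have hp0 : k < p 0 := (lt_conj_iff hp).mp (by omega)
      have hpk' : 1 ≤ p k := by omega
      have hsub : ∑ b ∈ Finset.range (k + 1), min (p b) (k + 1 - b)
          ≤ ∑ b ∈ Finset.range n, min (p b) (k + 1 - b) :=
        Finset.sum_le_sum_of_subset (Finset.range_subset_range.mpr hkn)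
      rw [Finset.sum_range_succ' (fun b => min (p b) (k + 1 - b)) k] at hsub
      have h1 : k * 1 ≤ ∑ i ∈ Finset.range k, min (p (i + 1)) (k + 1 - (i + 1)) := by
        have h := Finset.card_nsmul_le_sum (Finset.range k)
          (fun i => min (p (i + 1)) (k + 1 - (i + 1))) 1 (fun i hi => by
            have hik : i + 1 ≤ k := Finset.mem_range.mp hi
            have := hp.1 hik
            show 1 ≤ min (p (i + 1)) (k + 1 - (i + 1))
            omega)
        rwa [Finset.card_range, smul_eq_mul] at h
      have h2 : k + 1 ≤ min (p 0) (k + 1 - 0) := by omega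
      omega

/-- The main staircase estimate. -/
lemma stair_main {p : ℕ → ℕ} {n : ℕ} (hp : IsPartitionOf n p) (hn : 1 ≤ n) (N k : ℕ)
    (hN1 : 2 * N + 1 ≤ n) (hN2 : N + (cells p n).sup hookOp ≤ n) :
    min (n - N) (k + 1) + min N k
      ≤ ((cells p n).filter fun c => hookOp c ≤ k + 1).card := by
  by_cases hMk : (cells p n).sup hookOp ≤ k
  · have hfull : (cells p n).filter (fun c => hookOp c ≤ k + 1) = cells p n :=
      Finset.filter_true_of_mem fun c hc => le_trans (Finset.le_sup hc) (by omega)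
    rw [hfull, cells_card hp hn]
    omega
  · push_neg at hMk
    by_cases hkN : k ≤ N
    · have := core hp hn k (by omega) (by omega)
      omega
    · push_neg at hkN
      have haux : ∀ m, N ≤ m → m + 1 ≤ (cells p n).sup hookOp →
          N + 1 + m ≤ ((cells p n).filter fun c => hookOp c ≤ m + 1).card := by
        intro m hm
        induction m, hm using Nat.le_induction with
        | base =>
          intro h
          have := core hp hn N (by omega) (by omega)
          omega
        | succ m hm ih =>
          intro h
          have h1 := ih (by omega)
          have h2 := stair_step hp hn m (by omega)
          omega
      have := haux k (by omega) (by omega)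
      omega

lemma q_isPartitionOf {n N : ℕ} (hn : 1 ≤ n) (hN : 2 * N + 1 ≤ n) :
    IsPartitionOf n (fun b => if b = 0 then n - N else if b ≤ N then 1 else 0) := by
  refine ⟨?_, ?_, ?_⟩
  · intro a b hab
    simp only []
    split_ifs <;> omega
  · simp only []
    split_ifs <;> omega
  · obtain ⟨m, rfl⟩ : ∃ m, n = m + 1 := ⟨n - 1, by omega⟩
    rw [Finset.sum_range_succ']
    have h1 : ∀ i ∈ Finset.range m,
        (fun b => if b = 0 then m + 1 - N else if b ≤ N then 1 else 0) (i + 1)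
          = if i + 1 ≤ N then 1 else 0 := by
      intro i _
      simp
    rw [Finset.sum_congr rfl h1, ← Finset.card_filter]
    have h2 : (Finset.range m).filter (fun i => i + 1 ≤ N) = Finset.range N := by
      ext i
      simp only [Finset.mem_filter, Finset.mem_range]
      omega
    rw [h2, Finset.card_range]
    simp only [reduceIte]
    omega

lemma q_stair {n N : ℕ} (hn : 1 ≤ n) (hN : 2 * N + 1 ≤ n) (k : ℕ) :
    ∑ b ∈ Finset.range n,
        min (if b = 0 then n - N else if b ≤ N then 1 else 0) (k + 1 - b)
      = min (n - N) (k + 1) + min N k := by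
  obtain ⟨m, rfl⟩ : ∃ m, n = m + 1 := ⟨n - 1, by omega⟩
  rw [Finset.sum_range_succ']
  have h1 : ∀ i ∈ Finset.range m,
      min (if i + 1 = 0 then m + 1 - N else if i + 1 ≤ N then 1 else 0) (k + 1 - (i + 1))
        = if i + 1 ≤ N ∧ i + 1 ≤ k then 1 else 0 := by
    intro i _
    rw [if_neg (by omega : ¬ (i + 1 = 0))]
    split_ifs <;> omega
  rw [Finset.sum_congr rfl h1, ← Finset.card_filter]
  have h2 : (Finset.range m).filter (fun i => i + 1 ≤ N ∧ i + 1 ≤ k)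
      = Finset.range (min N k) := by
    ext i
    simp only [Finset.mem_filter, Finset.mem_range]
    omega
  rw [h2, Finset.card_range]
  simp only [reduceIte]
  omega

/-- Let `N(λ) = n - max_{c∈λ} h_c^op` be the diagonal excess, and set `N = N(λ)` if
`2N(λ)+1 ≤ n`, and `N = ⌊(n-1)/2⌋` otherwise. Then `λ ≲^diag (n-N, 1^N)`: for each
`i ≥ 1` the hook `(n-N, 1^N)` has at least as many cells of opposite hook length `≥ i`. -/
theorem diag_le_hook (n : ℕ) (p : ℕ → ℕ) (hn : 1 ≤ n) (hp : IsPartitionOf n p) :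
    ∀ i, 1 ≤ i →
      letI Nlam : ℕ := n - (cells p n).sup hookOp
      letI N : ℕ := if 2 * Nlam + 1 ≤ n then Nlam else (n - 1) / 2
      ((cells p n).filter fun c => i ≤ hookOp c).card ≤
        ((cells (fun b => if b = 0 then n - N else if b ≤ N then 1 else 0) n).filter
          fun c => i ≤ hookOp c).card := by
  intro i hi
  set M := (cells p n).sup hookOp with hMdef
  set N := if 2 * (n - M) + 1 ≤ n then n - M else (n - 1) / 2 with hNdef
  have hMn : M ≤ n := sup_le_n hp hn
  have hM1 : 1 ≤ M := by
    have h := Finset.le_sup (f := hookOp) (cells_zero_mem hp hn)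
    rw [show hookOp (0, 0) = 1 from rfl] at h
    exact h
  have hN1 : 2 * N + 1 ≤ n := by
    rw [hNdef]
    split_ifs with h
    · exact h
    · omega
  have hN2 : N + M ≤ n := by
    rw [hNdef]
    split_ifs with h <;> omega
  set q : ℕ → ℕ := fun b => if b = 0 then n - N else if b ≤ N then 1 else 0 with hqdef
  have hq : IsPartitionOf n q := q_isPartitionOf hn hN1
  rcases Nat.lt_or_ge i 2 with h2 | h2
  · have hi1 : i = 1 := by omega
    subst hi1
    have e1 : (cells p n).filter (fun c => 1 ≤ hookOp c) = cells p n :=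
      Finset.filter_true_of_mem fun c _ => by simp [hookOp]
    have e2 : (cells q n).filter (fun c => 1 ≤ hookOp c) = cells q n :=
      Finset.filter_true_of_mem fun c _ => by simp [hookOp]
    rw [e1, e2, cells_card hp hn, cells_card hq hn]
  · obtain ⟨k, rfl⟩ : ∃ k, i = k + 2 := ⟨i - 2, by omega⟩
    have hsplit : ∀ (r : ℕ → ℕ), IsPartitionOf n r →
        ((cells r n).filter fun c => k + 2 ≤ hookOp c).card
          + ((cells r n).filter fun c => hookOp c ≤ k + 1).card = n := by
      intro r hr
      have h := Finset.card_filter_add_card_filter_not (s := cells r n)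
        (p := fun c => k + 2 ≤ hookOp c)
      have hcong : (cells r n).filter (fun c => ¬ (k + 2 ≤ hookOp c))
          = (cells r n).filter (fun c => hookOp c ≤ k + 1) :=
        Finset.filter_congr fun c _ => by omega
      rw [hcong, cells_card hr hn] at h
      exact h
    have h1 := hsplit p hp
    have h2 := hsplit q hq
    have h3 : ((cells q n).filter fun c => hookOp c ≤ k + 1).card
        = min (n - N) (k + 1) + min N k := by
      rw [count_stair hq hn k]
      simp only [hqdef]
      exact q_stair hn hN1 k
    have h4 := stair_main hp hn N k hN1 hN2
    omega
end

section
/- Let λ ⊢ n where n = ℓs, and suppose λ can be written as s successive ribbons of length ℓ (equivalently, the ℓ-core of λ is empty). Then for any integer a, the number of cells c ∈ λ with h_c ≡ ±a (mod ℓ) equals s times the cardinality of the set {a mod ℓ, -a mod ℓ} (i.e., s if a ≡ -a mod ℓ, and 2s otherwise). -/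
/-- Two cells are adjacent if they share an edge. -/
def AdjCell (c d : ℕ × ℕ) : Prop :=
  (c.1 = d.1 ∧ (c.2 + 1 = d.2 ∨ d.2 + 1 = c.2)) ∨
  (c.2 = d.2 ∧ (c.1 + 1 = d.1 ∨ d.1 + 1 = c.1))

/-- `λ/μ` is a ribbon of length `ℓ`: `μ ⊆ λ`, the skew shape has `ℓ` cells, is
(edge-)connected, and contains no `2 × 2` square. -/
def IsRibbon (q p : ℕ → ℕ) (n ℓ : ℕ) : Prop :=
  (∀ i, q i ≤ p i) ∧
  (cells p n \ cells q n).card = ℓ ∧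
  (cells p n \ cells q n).Nonempty ∧
  (∀ c ∈ cells p n \ cells q n, ∀ d ∈ cells p n \ cells q n,
    Relation.ReflTransGen
      (fun x y => x ∈ cells p n \ cells q n ∧ y ∈ cells p n \ cells q n ∧ AdjCell x y) c d) ∧
  ¬ ∃ a b : ℕ, (a, b) ∈ cells p n \ cells q n ∧ (a + 1, b) ∈ cells p n \ cells q n ∧
      (a, b + 1) ∈ cells p n \ cells q n ∧ (a + 1, b + 1) ∈ cells p n \ cells q n

/-- `p` can be written as `s` successive ribbons each of length `ℓ`
(equivalently, the `ℓ`-core of `p` is empty). -/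
def RibbonDecomp (p : ℕ → ℕ) (n ℓ s : ℕ) : Prop :=
  ∃ f : ℕ → ℕ → ℕ, (∀ i, Antitone (f i)) ∧ (∀ j, f 0 j = 0) ∧ f s = p ∧
    ∀ i < s, IsRibbon (f i) (f (i + 1)) n ℓ


open Finset

/-- residue condition -/
abbrev Pp (ℓ : ℕ) (α : ZMod ℓ) (d : ℕ) : Prop := (d : ZMod ℓ) = α ∨ (d : ZMod ℓ) = -α

/-- beta set (first-column hook lengths) -/
def betaSet (p : ℕ → ℕ) (n : ℕ) : Finset ℕ := (Finset.range n).image fun i => p i + (n - 1 - i)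

lemma card_filter_prod (n : ℕ) (F : ℕ × ℕ → Prop) [DecidablePred F] :
    ((range n ×ˢ range n).filter F).card
      = ∑ b ∈ range n, ((range n).filter fun a => F (a, b)).card := by
  rw [Finset.card_filter, Finset.sum_product_right]
  exact Finset.sum_congr rfl fun b _ => (Finset.card_filter _ _).symm

def cnt (ℓ : ℕ) (α : ZMod ℓ) (B : Finset ℕ) : ℕ :=
  ∑ x ∈ B, ((Finset.range x).filter fun c => c ∉ B ∧ Pp ℓ α (x - c)).card

lemma pp_card (ℓ : ℕ) (hℓ : 0 < ℓ) (α : ZMod ℓ) :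
    ((range ℓ).filter (Pp ℓ α)).card = if α = -α then 1 else 2 := by
  haveI : NeZero ℓ := ⟨hℓ.ne'⟩
  have h1 : ((range ℓ).filter (Pp ℓ α)).card = ({α, -α} : Finset (ZMod ℓ)).card := by
    refine Finset.card_bij (fun d _ => ((d : ℕ) : ZMod ℓ)) ?_ ?_ ?_
    · intro d hd
      simp only [mem_filter, mem_range] at hd
      simp only [mem_insert, mem_singleton]
      exact hd.2
    · intro d hd d' hd' h
      simp only [mem_filter, mem_range] at hd hd'
      rw [← ZMod.val_cast_of_lt hd.1, ← ZMod.val_cast_of_lt hd'.1, h]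
    · intro z hz
      simp only [mem_insert, mem_singleton] at hz
      refine ⟨z.val, ?_, (ZMod.natCast_rightInverse z)⟩
      simp only [mem_filter, mem_range]
      refine ⟨z.val_lt, ?_⟩
      unfold Pp
      rw [ZMod.natCast_rightInverse z]
      exact hz
  rw [h1]
  by_cases h : α = -α
  · rw [if_pos h, ← h, Finset.pair_eq_singleton, Finset.card_singleton]
  · rw [if_neg h, Finset.card_insert_of_notMem (by simp [h]), Finset.card_singleton]

def gcnt (ℓ : ℕ) (α : ZMod ℓ) (S : Finset ℕ) (y : ℕ) : ℕ :=
  ((Finset.range y).filter fun c => c ∉ S ∧ Pp ℓ α (y - c)).card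

lemma pp_add_ell (ℓ : ℕ) (α : ZMod ℓ) (d : ℕ) : Pp ℓ α (d + ℓ) ↔ Pp ℓ α d := by
  unfold Pp; push_cast; simp [ZMod.natCast_self]

lemma gcnt_move_other (ℓ : ℕ) (hℓ : 0 < ℓ) (α : ZMod ℓ) (B : Finset ℕ) (x : ℕ)
    (hx : x ∈ B) (hxl : x + ℓ ∉ B) (y : ℕ) (hy : y ∈ B) (hyx : y ≠ x) :
    gcnt ℓ α (insert (x + ℓ) (B.erase x)) y
      = gcnt ℓ α B y + (if x < y ∧ y < x + ℓ ∧ Pp ℓ α (y - x) then 1 else 0) := by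
  have memB' : ∀ c : ℕ, c ∈ insert (x + ℓ) (B.erase x) ↔ (c = x + ℓ ∨ (c ∈ B ∧ c ≠ x)) := by
    intro c; simp only [Finset.mem_insert, Finset.mem_erase]; tauto
  have hxnotB' : x ∉ insert (x + ℓ) (B.erase x) := by
    rw [memB']; push_neg; exact ⟨by omega, fun _ => rfl⟩
  have hyne : y ≠ x + ℓ := fun h => hxl (h ▸ hy)
  unfold gcnt
  rcases Nat.lt_or_ge x y with hxy | hxy
  · rcases Nat.lt_or_ge y (x + ℓ) with hyl | hyl
    · -- x < y < x + ℓ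
      by_cases hP : Pp ℓ α (y - x)
      · rw [if_pos ⟨hxy, hyl, hP⟩]
        have hset : (Finset.range y).filter (fun c => c ∉ insert (x + ℓ) (B.erase x) ∧ Pp ℓ α (y - c))
            = insert x ((Finset.range y).filter fun c => c ∉ B ∧ Pp ℓ α (y - c)) := by
          ext c
          simp only [Finset.mem_insert, Finset.mem_filter, Finset.mem_range, memB']
          constructor
          · rintro ⟨h1, h2, h3⟩
            push_neg at h2
            by_cases hcx : c = x
            · exact Or.inl hcx
            · exact Or.inr ⟨h1, fun hcB => hcx (h2.2 hcB), h3⟩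
          · rintro (rfl | ⟨h1, h2, h3⟩)
            · exact ⟨hxy, by push_neg; exact ⟨by omega, fun _ => rfl⟩, hP⟩
            · exact ⟨h1, by push_neg; exact ⟨by omega, fun h => absurd h h2⟩, h3⟩
        rw [hset, Finset.card_insert_of_notMem (by simp [hx])]
      · rw [if_neg (by tauto), add_zero]
        congr 1
        apply Finset.filter_congr
        intro c hc
        rw [Finset.mem_range] at hc
        by_cases hcx : c = x
        · subst hcx
          constructor
          · rintro ⟨-, h⟩; exact absurd h hP
          · rintro ⟨h, -⟩; exact absurd hx h
        · have : c ∈ insert (x + ℓ) (B.erase x) ↔ c ∈ B := by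
            rw [memB']
            constructor
            · rintro (h | ⟨h, -⟩)
              · omega
              · exact h
            · intro h; exact Or.inr ⟨h, hcx⟩
          rw [this]
    · -- y > x + ℓ (y ≠ x+ℓ)
      have hyl' : x + ℓ < y := by omega
      rw [if_neg (by omega), add_zero]
      have hPiff : Pp ℓ α (y - x) ↔ Pp ℓ α (y - (x + ℓ)) := by
        have h2 : y - x = (y - (x + ℓ)) + ℓ := by omega
        rw [h2, pp_add_ell]
      by_cases hP : Pp ℓ α (y - x)
      · have hmem : x + ℓ ∈ (Finset.range y).filter (fun c => c ∉ B ∧ Pp ℓ α (y - c)) := by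
          simp only [Finset.mem_filter, Finset.mem_range]
          exact ⟨hyl', hxl, hPiff.mp hP⟩
        have hset : (Finset.range y).filter (fun c => c ∉ insert (x + ℓ) (B.erase x) ∧ Pp ℓ α (y - c))
            = insert x (((Finset.range y).filter fun c => c ∉ B ∧ Pp ℓ α (y - c)).erase (x + ℓ)) := by
          ext c
          simp only [Finset.mem_insert, Finset.mem_erase, Finset.mem_filter, Finset.mem_range, memB']
          constructor
          · rintro ⟨h1, h2, h3⟩
            push_neg at h2
            by_cases hcx : c = x
            · exact Or.inl hcx
            · exact Or.inr ⟨h2.1, h1, fun hcB => hcx (h2.2 hcB), h3⟩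
          · rintro (rfl | ⟨h0, h1, h2, h3⟩)
            · exact ⟨by omega, by push_neg; exact ⟨by omega, fun _ => rfl⟩, hP⟩
            · exact ⟨h1, by push_neg; exact ⟨h0, fun h => absurd h h2⟩, h3⟩
        rw [hset, Finset.card_insert_of_notMem (by simp [hx]), Finset.card_erase_of_mem hmem]
        have hpos : 0 < ((Finset.range y).filter fun c => c ∉ B ∧ Pp ℓ α (y - c)).card :=
          Finset.card_pos.mpr ⟨x + ℓ, hmem⟩
        omega
      · congr 1
        apply Finset.filter_congr
        intro c hc
        rw [Finset.mem_range] at hc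
        by_cases hcx : c = x
        · subst hcx
          constructor
          · rintro ⟨-, h⟩; exact absurd h hP
          · rintro ⟨h, -⟩; exact absurd hx h
        · by_cases hcl : c = x + ℓ
          · subst hcl
            constructor
            · rintro ⟨h, -⟩
              exact absurd (by rw [memB']; exact Or.inl rfl) h
            · rintro ⟨-, h⟩
              exact absurd h (fun h' => hP (hPiff.mpr h'))
          · have : c ∈ insert (x + ℓ) (B.erase x) ↔ c ∈ B := by
              rw [memB']
              constructor
              · rintro (h | ⟨h, -⟩)
                · exact absurd h hcl
                · exact h
              · intro h; exact Or.inr ⟨h, hcx⟩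
            rw [this]
  · -- y ≤ x, y ≠ x so y < x
    rw [if_neg (by omega), add_zero]
    congr 1
    apply Finset.filter_congr
    intro c hc
    rw [Finset.mem_range] at hc
    have : c ∈ insert (x + ℓ) (B.erase x) ↔ c ∈ B := by
      rw [memB']
      constructor
      · rintro (h | ⟨h, -⟩); · omega
        · exact h
      · intro h; exact Or.inr ⟨h, by omega⟩
    rw [this]

lemma pp_zero_iff (ℓ : ℕ) (α : ZMod ℓ) : Pp ℓ α 0 ↔ α = 0 := by
  unfold Pp
  push_cast
  constructor
  · rintro (h | h)
    · exact h.symm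
    · exact neg_eq_zero.mp h.symm
  · rintro rfl; exact Or.inl rfl

lemma pp_ell_iff (ℓ : ℕ) (α : ZMod ℓ) : Pp ℓ α ℓ ↔ α = 0 := by
  have : Pp ℓ α ℓ ↔ Pp ℓ α (0 + ℓ) := by norm_num
  rw [this, pp_add_ell, pp_zero_iff]

lemma pp_refl (ℓ : ℕ) (α : ZMod ℓ) (d : ℕ) (hd : d ≤ ℓ) : Pp ℓ α (ℓ - d) ↔ Pp ℓ α d := by
  have hcast : ((ℓ - d : ℕ) : ZMod ℓ) = -(d : ZMod ℓ) := by
    have h : ((ℓ - d : ℕ) : ZMod ℓ) + (d : ZMod ℓ) = ((ℓ : ℕ) : ZMod ℓ) := by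
      rw [← Nat.cast_add]
      congr 1
      omega
    rw [ZMod.natCast_self] at h
    linear_combination h
  unfold Pp
  rw [hcast]
  constructor
  · rintro (h | h)
    · right; rw [← h, neg_neg]
    · left; exact neg_injective h
  · rintro (h | h)
    · right; rw [h]
    · left; rw [h, neg_neg]

lemma gcnt_move_self (ℓ : ℕ) (hℓ : 0 < ℓ) (α : ZMod ℓ) (B : Finset ℕ) (x : ℕ)
    (hx : x ∈ B) (hxl : x + ℓ ∉ B) :
    gcnt ℓ α (insert (x + ℓ) (B.erase x)) (x + ℓ)
      = gcnt ℓ α B x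
        + ((Finset.Ico x (x + ℓ)).filter
            fun c => c ∉ insert (x + ℓ) (B.erase x) ∧ Pp ℓ α (x + ℓ - c)).card := by
  have memB' : ∀ c : ℕ, c ∈ insert (x + ℓ) (B.erase x) ↔ (c = x + ℓ ∨ (c ∈ B ∧ c ≠ x)) := by
    intro c; simp only [Finset.mem_insert, Finset.mem_erase]; tauto
  unfold gcnt
  rw [Finset.range_eq_Ico,
    ← Finset.Ico_union_Ico_eq_Ico (Nat.zero_le x) (by omega : x ≤ x + ℓ),
    Finset.filter_union,
    Finset.card_union_of_disjoint
      (Finset.disjoint_filter_filter (Finset.Ico_disjoint_Ico_consecutive 0 x (x + ℓ)))]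
  congr 1
  rw [← Finset.range_eq_Ico]
  refine congrArg Finset.card ?_
  apply Finset.filter_congr
  intro c hc
  rw [Finset.mem_range] at hc
  have h1 : (c ∈ insert (x + ℓ) (B.erase x)) ↔ c ∈ B := by
    rw [memB']
    constructor
    · rintro (h | ⟨h, -⟩)
      · omega
      · exact h
    · intro h; exact Or.inr ⟨h, by omega⟩
  have h2 : x + ℓ - c = (x - c) + ℓ := by omega
  rw [h1, h2, pp_add_ell]

lemma cnt_move (ℓ : ℕ) (hℓ : 0 < ℓ) (α : ZMod ℓ) (B : Finset ℕ) (x : ℕ)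
    (hx : x ∈ B) (hxl : x + ℓ ∉ B) :
    cnt ℓ α (insert (x + ℓ) (B.erase x)) = cnt ℓ α B + (if α = -α then 1 else 2) := by
  have memB' : ∀ c : ℕ, c ∈ insert (x + ℓ) (B.erase x) ↔ (c = x + ℓ ∨ (c ∈ B ∧ c ≠ x)) := by
    intro c; simp only [Finset.mem_insert, Finset.mem_erase]; tauto
  have hxnotB' : x ∉ insert (x + ℓ) (B.erase x) := by
    rw [memB']; push_neg; exact ⟨by omega, fun _ => rfl⟩
  -- decompose cnt B'
  have e1 : cnt ℓ α (insert (x + ℓ) (B.erase x))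
      = gcnt ℓ α (insert (x + ℓ) (B.erase x)) (x + ℓ)
        + ∑ y ∈ B.erase x, gcnt ℓ α (insert (x + ℓ) (B.erase x)) y :=
    Finset.sum_insert (fun h => hxl (Finset.mem_of_mem_erase h))
  have e2 : cnt ℓ α B = gcnt ℓ α B x + ∑ y ∈ B.erase x, gcnt ℓ α B y :=
    (Finset.add_sum_erase B (gcnt ℓ α B) hx).symm
  -- per-y increments
  have e3 : ∑ y ∈ B.erase x, gcnt ℓ α (insert (x + ℓ) (B.erase x)) y
      = ∑ y ∈ B.erase x, gcnt ℓ α B y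
        + ((B.erase x).filter fun y => x < y ∧ y < x + ℓ ∧ Pp ℓ α (y - x)).card := by
    rw [Finset.card_filter, ← Finset.sum_add_distrib]
    apply Finset.sum_congr rfl
    intro y hy
    exact gcnt_move_other ℓ hℓ α B x hx hxl y (Finset.mem_of_mem_erase hy)
      (Finset.ne_of_mem_erase hy)
  -- A1 : elements of B strictly between x and x+ℓ (as distances)
  have e4 : ((B.erase x).filter fun y => x < y ∧ y < x + ℓ ∧ Pp ℓ α (y - x)).card
      = ((Finset.Ico 1 ℓ).filter fun d => x + d ∈ B ∧ Pp ℓ α d).card := by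
    apply Finset.card_bij' (fun y _ => y - x) (fun d _ => x + d)
    · intro y hy
      simp only [Finset.mem_filter, Finset.mem_erase, Finset.mem_Ico] at *
      obtain ⟨⟨hyx, hyB⟩, h1, h2, h3⟩ := hy
      have hyx' : x + (y - x) = y := by omega
      refine ⟨⟨by omega, by omega⟩, by rw [hyx']; exact hyB, h3⟩
    · intro d hd
      simp only [Finset.mem_filter, Finset.mem_erase, Finset.mem_Ico] at *
      obtain ⟨⟨hd1, hd2⟩, hdB, hdP⟩ := hd
      have : x + d - x = d := by omega
      refine ⟨⟨by omega, hdB⟩, by omega, by omega, by rw [this]; exact hdP⟩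
    · intro y hy
      simp only [Finset.mem_filter, Finset.mem_erase] at hy
      omega
    · intro d hd
      simp only [Finset.mem_filter, Finset.mem_Ico] at hd
      omega
  -- A2 : reindex boundary term by distance d = x + ℓ - c
  have e5 : ((Finset.Ico x (x + ℓ)).filter
        fun c => c ∉ insert (x + ℓ) (B.erase x) ∧ Pp ℓ α (x + ℓ - c)).card
      = ((Finset.Icc 1 ℓ).filter
          fun d => x + ℓ - d ∉ insert (x + ℓ) (B.erase x) ∧ Pp ℓ α d).card := by
    apply Finset.card_bij' (fun c _ => x + ℓ - c) (fun d _ => x + ℓ - d)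
    · intro c hc
      simp only [Finset.mem_filter, Finset.mem_Ico, Finset.mem_Icc] at *
      obtain ⟨⟨h1, h2⟩, h3, h4⟩ := hc
      have : x + ℓ - (x + ℓ - c) = c := by omega
      exact ⟨⟨by omega, by omega⟩, by rw [this]; exact h3, h4⟩
    · intro d hd
      simp only [Finset.mem_filter, Finset.mem_Ico, Finset.mem_Icc] at *
      obtain ⟨⟨h1, h2⟩, h3, h4⟩ := hd
      have : x + ℓ - (x + ℓ - d) = d := by omega
      exact ⟨⟨by omega, by omega⟩, h3, by rw [this]; exact h4⟩
    · intro c hc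
      simp only [Finset.mem_filter, Finset.mem_Ico] at hc
      omega
    · intro d hd
      simp only [Finset.mem_filter, Finset.mem_Icc] at hd
      omega
  -- split off d = ℓ
  have e6 : ((Finset.Icc 1 ℓ).filter
        fun d => x + ℓ - d ∉ insert (x + ℓ) (B.erase x) ∧ Pp ℓ α d).card
      = ((Finset.Ico 1 ℓ).filter fun d => x + d ∉ B ∧ Pp ℓ α d).card
        + (if α = 0 then 1 else 0) := by
    have hsplit : Finset.Icc 1 ℓ = insert ℓ (Finset.Ico 1 ℓ) := by
      ext d; simp only [Finset.mem_Icc, Finset.mem_insert, Finset.mem_Ico]; omega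
    rw [hsplit, Finset.filter_insert]
    have hIco : (Finset.Ico 1 ℓ).filter
          (fun d => x + ℓ - d ∉ insert (x + ℓ) (B.erase x) ∧ Pp ℓ α d)
        = (Finset.Ico 1 ℓ).filter fun d => x + ℓ - d ∉ B ∧ Pp ℓ α d := by
      apply Finset.filter_congr
      intro d hd
      rw [Finset.mem_Ico] at hd
      have : (x + ℓ - d ∈ insert (x + ℓ) (B.erase x)) ↔ x + ℓ - d ∈ B := by
        rw [memB']
        constructor
        · rintro (h | ⟨h, -⟩)
          · omega
          · exact h
        · intro h; exact Or.inr ⟨h, by omega⟩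
      rw [this]
    have hrefl : ((Finset.Ico 1 ℓ).filter fun d => x + ℓ - d ∉ B ∧ Pp ℓ α d).card
        = ((Finset.Ico 1 ℓ).filter fun d => x + d ∉ B ∧ Pp ℓ α d).card := by
      apply Finset.card_bij' (fun d _ => ℓ - d) (fun d _ => ℓ - d)
      · intro d hd
        simp only [Finset.mem_filter, Finset.mem_Ico] at *
        obtain ⟨⟨h1, h2⟩, h3, h4⟩ := hd
        have he : x + (ℓ - d) = x + ℓ - d := by omega
        exact ⟨⟨by omega, by omega⟩, by rw [he]; exact h3,
          (pp_refl ℓ α d (by omega)).mpr h4⟩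
      · intro d hd
        simp only [Finset.mem_filter, Finset.mem_Ico] at *
        obtain ⟨⟨h1, h2⟩, h3, h4⟩ := hd
        have he : x + ℓ - (ℓ - d) = x + d := by omega
        exact ⟨⟨by omega, by omega⟩, by rw [he]; exact h3,
          (pp_refl ℓ α d (by omega)).mpr h4⟩
      · intro d hd
        simp only [Finset.mem_filter, Finset.mem_Ico] at hd
        omega
      · intro d hd
        simp only [Finset.mem_filter, Finset.mem_Ico] at hd
        omega
    by_cases hα : α = 0
    · rw [if_pos (by
        constructor
        · rw [show x + ℓ - ℓ = x by omega]; exact hxnotB'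
        · exact (pp_ell_iff ℓ α).mpr hα)]
      rw [Finset.card_insert_of_notMem (by simp), hIco, hrefl, if_pos hα]
    · rw [if_neg (by
        rintro ⟨-, h⟩
        exact hα ((pp_ell_iff ℓ α).mp h))]
      rw [hIco, hrefl, if_neg hα, add_zero]
  -- combine the two Ico counts
  have e7 : ((Finset.Ico 1 ℓ).filter fun d => x + d ∈ B ∧ Pp ℓ α d).card
      + ((Finset.Ico 1 ℓ).filter fun d => x + d ∉ B ∧ Pp ℓ α d).card
      = ((Finset.Ico 1 ℓ).filter (Pp ℓ α)).card := by
    have hc1 : (Finset.Ico 1 ℓ).filter (fun d => x + d ∈ B ∧ Pp ℓ α d)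
        = ((Finset.Ico 1 ℓ).filter (Pp ℓ α)).filter (fun d => x + d ∈ B) := by
      rw [Finset.filter_filter]
      apply Finset.filter_congr
      intro d _
      tauto
    have hc2 : (Finset.Ico 1 ℓ).filter (fun d => x + d ∉ B ∧ Pp ℓ α d)
        = ((Finset.Ico 1 ℓ).filter (Pp ℓ α)).filter (fun d => ¬(x + d ∈ B)) := by
      rw [Finset.filter_filter]
      apply Finset.filter_congr
      intro d _
      tauto
    rw [hc1, hc2]
    exact Finset.card_filter_add_card_filter_not _
  -- relate to range ℓ count
  have e8 : ((Finset.Ico 1 ℓ).filter (Pp ℓ α)).card + (if α = 0 then 1 else 0)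
      = ((Finset.range ℓ).filter (Pp ℓ α)).card := by
    have hsplit : Finset.range ℓ = insert 0 (Finset.Ico 1 ℓ) := by
      ext d; simp only [Finset.mem_range, Finset.mem_insert, Finset.mem_Ico]; omega
    rw [hsplit, Finset.filter_insert]
    by_cases hα : α = 0
    · rw [if_pos ((pp_zero_iff ℓ α).mpr hα), if_pos hα,
        Finset.card_insert_of_notMem (by simp)]
    · rw [if_neg (fun h => hα ((pp_zero_iff ℓ α).mp h)), if_neg hα, add_zero]
  have e9 := pp_card ℓ hℓ α
  rw [e1, e2, e3, e4, gcnt_move_self ℓ hℓ α B x hx hxl, e5, e6]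
  omega


lemma cnt_zero (n ℓ : ℕ) (α : ZMod ℓ) : cnt ℓ α (betaSet (fun _ => 0) n) = 0 := by
  apply Finset.sum_eq_zero
  intro x hxx
  rw [Finset.card_eq_zero, Finset.filter_eq_empty_iff]
  intro c hc
  rw [Finset.mem_range] at hc
  rintro ⟨h1, -⟩
  apply h1
  simp only [betaSet, Finset.mem_image, Finset.mem_range] at hxx ⊢
  obtain ⟨i, hi, hix⟩ := hxx
  exact ⟨n - 1 - c, by omega, by omega⟩


section L1
variable (n ℓ : ℕ) (α : ZMod ℓ) (p : ℕ → ℕ)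

lemma conjP_le (a : ℕ) : conjP p n a ≤ n := by
  unfold conjP
  calc _ ≤ (range n).card := Finset.card_filter_le _ _
  _ = n := Finset.card_range n

lemma conjP_anti (hmono : Antitone p) : Antitone (conjP p n) := by
  intro a a' h
  apply Finset.card_le_card
  intro b hb
  simp only [Finset.mem_filter, Finset.mem_range] at *
  omega

lemma gam_strictMono (hmono : Antitone p) : StrictMono (fun a => a + (n - conjP p n a)) := by
  apply strictMono_nat_of_lt_succ
  intro a
  have h1 : conjP p n (a + 1) ≤ conjP p n a := conjP_anti n p hmono (by omega)
  have h2 : conjP p n a ≤ n := conjP_le n p a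
  show a + (n - conjP p n a) < (a + 1) + (n - conjP p n (a + 1))
  omega

lemma conjP_lower (hmono : Antitone p) (a b : ℕ) (hb : b < n) (h : a < p b) :
    b + 1 ≤ conjP p n a := by
  unfold conjP
  calc b + 1 = (range (b+1)).card := (Finset.card_range _).symm
  _ ≤ _ := by
      apply Finset.card_le_card
      intro r hr
      simp only [Finset.mem_range, Finset.mem_filter] at *
      have : p b ≤ p r := hmono (by omega)
      omega

lemma conjP_upper (hmono : Antitone p) (a b : ℕ) (h : p b ≤ a) :
    conjP p n a ≤ b := by
  unfold conjP
  calc _ ≤ (range b).card := by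
        apply Finset.card_le_card
        intro r hr
        simp only [Finset.mem_range, Finset.mem_filter] at *
        by_contra hc
        have : p r ≤ p b := hmono (by omega)
        omega
  _ = b := Finset.card_range b

lemma gam_lt_beta (hmono : Antitone p) (a b : ℕ) (hb : b < n) (h : a < p b) :
    a + (n - conjP p n a) < p b + (n - 1 - b) := by
  have h1 := conjP_lower n p hmono a b hb h
  have h2 := conjP_le n p a
  omega

lemma beta_lt_gam (hmono : Antitone p) (a b : ℕ) (hb : b < n) (h : p b ≤ a) :
    p b + (n - 1 - b) < a + (n - conjP p n a) := by
  have h1 := conjP_upper n p hmono a b h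
  omega

lemma gam_not_mem (hmono : Antitone p) (a : ℕ) :
    a + (n - conjP p n a) ∉ betaSet p n := by
  intro hmem
  simp only [betaSet, Finset.mem_image, Finset.mem_range] at hmem
  obtain ⟨i, hi, hix⟩ := hmem
  rcases Nat.lt_or_ge a (p i) with h | h
  · have := gam_lt_beta n p hmono a i hi h
    omega
  · have := beta_lt_gam n p hmono a i hi h
    omega

lemma hook_eq (hmono : Antitone p) (a b : ℕ) (hb : b < n) (h : a < p b) :
    hookLen p n (a, b) = (p b + (n - 1 - b)) - (a + (n - conjP p n a)) := by
  have h1 := conjP_lower n p hmono a b hb h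
  have h2 := conjP_le n p a
  unfold hookLen
  simp only
  omega

lemma beta_card (hmono : Antitone p) : (betaSet p n).card = n := by
  unfold betaSet
  rw [Finset.card_image_of_injOn, Finset.card_range]
  intro i hi j hj hij
  simp only [Finset.mem_coe, Finset.mem_range] at hi hj
  simp only at hij
  by_contra hne
  rcases Nat.lt_or_ge i j with h | h
  · have : p j ≤ p i := hmono (by omega)
    omega
  · have hji : j < i := by omega
    have : p i ≤ p j := hmono (by omega)
    omega

lemma beta_union (hmono : Antitone p) (hp0 : p 0 ≤ n) (hn : 0 < n) :
    betaSet p n ∪ (range n).image (fun a => a + (n - conjP p n a)) = range (2 * n) := by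
  have hdisj : Disjoint (betaSet p n) ((range n).image fun a => a + (n - conjP p n a)) := by
    rw [Finset.disjoint_right]
    intro t ht
    simp only [Finset.mem_image, Finset.mem_range] at ht
    obtain ⟨a, ha, rfl⟩ := ht
    exact gam_not_mem n p hmono a
  apply Finset.eq_of_subset_of_card_le
  · intro t ht
    rw [Finset.mem_union] at ht
    rcases ht with ht | ht <;> simp only [betaSet, Finset.mem_image, Finset.mem_range] at ht <;>
      obtain ⟨i, hi, rfl⟩ := ht <;> rw [Finset.mem_range]
    · have : p i ≤ p 0 := hmono (by omega)
      omega
    · have := conjP_le n p i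
      omega
  · rw [Finset.card_range, Finset.card_union_of_disjoint hdisj, beta_card n p hmono,
      Finset.card_image_of_injOn (Function.Injective.injOn
        (gam_strictMono n p hmono).injective), Finset.card_range]
    omega

lemma gap_surj (hmono : Antitone p) (hp0 : p 0 ≤ n) (hn : 0 < n) (b c : ℕ) (hb : b < n)
    (hc : c < p b + (n - 1 - b)) (hcB : c ∉ betaSet p n) :
    ∃ a < n, a + (n - conjP p n a) = c ∧ a < p b := by
  have hpb : p b ≤ n := le_trans (hmono (Nat.zero_le b)) hp0
  have hrange : c ∈ range (2 * n) := by
    rw [Finset.mem_range]; omega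
  rw [← beta_union n p hmono hp0 hn, Finset.mem_union] at hrange
  rcases hrange with h | h
  · exact absurd h hcB
  · simp only [Finset.mem_image, Finset.mem_range] at h
    obtain ⟨a, ha, rfl⟩ := h
    refine ⟨a, ha, rfl, ?_⟩
    by_contra hge
    have := beta_lt_gam n p hmono a b hb (by omega)
    omega

lemma count_eq_cnt (hmono : Antitone p) (hp0 : p 0 ≤ n) :
    ((cells p n).filter fun c =>
        (hookLen p n c : ZMod ℓ) = α ∨ (hookLen p n c : ZMod ℓ) = -α).card
      = cnt ℓ α (betaSet p n) := by
  rcases Nat.eq_zero_or_pos n with hn | hn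
  · subst hn
    simp [cells, cnt, betaSet]
  have hL : ((cells p n).filter fun c =>
        (hookLen p n c : ZMod ℓ) = α ∨ (hookLen p n c : ZMod ℓ) = -α).card
      = ∑ b ∈ range n, ((range n).filter fun a =>
          a < p b ∧ Pp ℓ α (hookLen p n (a, b))).card := by
    unfold cells
    rw [Finset.filter_filter]
    exact card_filter_prod n _
  rw [hL]
  have hR : cnt ℓ α (betaSet p n)
      = ∑ b ∈ range n, ((range (p b + (n - 1 - b))).filter fun c =>
          c ∉ betaSet p n ∧ Pp ℓ α ((p b + (n - 1 - b)) - c)).card := by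
    unfold cnt betaSet
    rw [Finset.sum_image]
    intro i hi j hj hij
    simp only [Finset.mem_coe, Finset.mem_range] at hi hj
    simp only at hij
    by_contra hne
    rcases Nat.lt_or_ge i j with h | h
    · have : p j ≤ p i := hmono (by omega)
      omega
    · have hji : j < i := by omega
      have : p i ≤ p j := hmono (by omega)
      omega
  rw [hR]
  apply Finset.sum_congr rfl
  intro b hb
  rw [Finset.mem_range] at hb
  have hpb : p b ≤ n := le_trans (hmono (Nat.zero_le b)) hp0
  apply Finset.card_bij (fun a _ => a + (n - conjP p n a))
  · intro a ha
    simp only [Finset.mem_filter, Finset.mem_range] at ha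
    obtain ⟨-, hap, hP⟩ := ha
    simp only [Finset.mem_filter, Finset.mem_range]
    refine ⟨gam_lt_beta n p hmono a b hb hap, gam_not_mem n p hmono a, ?_⟩
    rwa [← hook_eq n p hmono a b hb hap]
  · intro a ha a' ha' h
    exact (gam_strictMono n p hmono).injective h
  · intro c hc
    simp only [Finset.mem_filter, Finset.mem_range] at hc
    obtain ⟨hlt, hcB, hP⟩ := hc
    obtain ⟨a, ha, hac, hap⟩ := gap_surj n p hmono hp0 hn b c hb hlt hcB
    refine ⟨a, ?_, hac⟩
    simp only [Finset.mem_filter, Finset.mem_range]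
    refine ⟨ha, hap, ?_⟩
    rw [hook_eq n p hmono a b hb hap, hac]
    exact hP
end L1


lemma crossing {S : Finset (ℕ × ℕ)} {c d : ℕ × ℕ} (r : ℕ)
    (h : Relation.ReflTransGen (fun x y => x ∈ S ∧ y ∈ S ∧ AdjCell x y) c d)
    (hc : c.2 ≤ r) (hd : r < d.2) : ∃ a, (a, r) ∈ S ∧ (a, r + 1) ∈ S := by
  induction h with
  | refl => omega
  | @tail m e h1 h2 ih =>
    obtain ⟨hmS, heS, hadj⟩ := h2
    rcases Nat.lt_or_ge r m.2 with hm | hm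
    · exact ih hm
    · rcases hadj with ⟨hcol, hrow⟩ | ⟨hrow, -⟩
      · rcases hrow with hup | hdown
        · have h1 : m.2 = r := by omega
          have h2 : e.2 = r + 1 := by omega
          refine ⟨m.1, ?_, ?_⟩
          · rw [← h1, Prod.mk.eta]; exact hmS
          · have : (m.1, r + 1) = e := by
              rw [← h2, hcol]
            rw [this]; exact heS
        · omega
      · omega

lemma ribbon_beta (n ℓ : ℕ) (q p : ℕ → ℕ) (hq : Antitone q) (hp : Antitone p)
    (hp0 : p 0 ≤ n) (rib : IsRibbon q p n ℓ) :
    ∃ x, x ∈ betaSet q n ∧ x + ℓ ∉ betaSet q n ∧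
      betaSet p n = insert (x + ℓ) ((betaSet q n).erase x) := by
  obtain ⟨hle, hcard, hne, hconn, h2x2⟩ := rib
  have hskew : ∀ a b : ℕ, ((a, b) ∈ cells p n \ cells q n) ↔ (b < n ∧ q b ≤ a ∧ a < p b) := by
    intro a b
    have hpb : p b ≤ n := le_trans (hp (Nat.zero_le b)) hp0
    simp only [cells, Finset.mem_sdiff, Finset.mem_filter, Finset.mem_product, Finset.mem_range]
    constructor
    · rintro ⟨⟨⟨ha, hb⟩, hpa⟩, hq'⟩
      refine ⟨hb, ?_, hpa⟩
      by_contra hlt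
      exact hq' ⟨⟨ha, hb⟩, by omega⟩
    · rintro ⟨hb, hqa, hpa⟩
      have ha : a < n := by omega
      exact ⟨⟨⟨ha, hb⟩, hpa⟩, fun hin => by omega⟩
  set T := (range n).filter (fun b => q b < p b) with hT
  have hTne : T.Nonempty := by
    obtain ⟨⟨a, b⟩, hab⟩ := hne
    rw [hskew] at hab
    exact ⟨b, by rw [hT, Finset.mem_filter, Finset.mem_range]; exact ⟨hab.1, by omega⟩⟩
  set i := T.min' hTne with hi
  set j := T.max' hTne with hj
  have hiT : i ∈ T := T.min'_mem hTne
  have hjT : j ∈ T := T.max'_mem hTne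
  have hij : i ≤ j := T.min'_le _ hjT
  have hin : i < n := by
    have := hiT; rw [hT, Finset.mem_filter, Finset.mem_range] at this; exact this.1
  have hjn : j < n := by
    have := hjT; rw [hT, Finset.mem_filter, Finset.mem_range] at this; exact this.1
  have hqpi : q i < p i := by
    have := hiT; rw [hT, Finset.mem_filter] at this; exact this.2
  have hqpj : q j < p j := by
    have := hjT; rw [hT, Finset.mem_filter] at this; exact this.2
  have hout : ∀ r, r < n → (r < i ∨ j < r) → p r = q r := by
    intro r hrn hro
    have hrT : r ∉ T := by
      intro hrT
      have h1 := T.min'_le r hrT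
      have h2 := T.le_max' r hrT
      rw [← hi] at h1; rw [← hj] at h2
      omega
    rw [hT, Finset.mem_filter, Finset.mem_range] at hrT
    push_neg at hrT
    exact le_antisymm (hrT hrn) (hle r)
  have hstep : ∀ r, i ≤ r → r < j → q r + 1 = p (r + 1) := by
    intro r hir hrj
    have hcell_i : (q i, i) ∈ cells p n \ cells q n := (hskew _ _).mpr ⟨hin, le_rfl, hqpi⟩
    have hcell_j : (q j, j) ∈ cells p n \ cells q n := (hskew _ _).mpr ⟨hjn, le_rfl, hqpj⟩
    obtain ⟨a, h1, h2⟩ := crossing r (hconn _ hcell_i _ hcell_j)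
      (by simpa using hir) (by simpa using hrj)
    rw [hskew] at h1 h2
    have hlow : q r < p (r + 1) := by omega
    have hhigh : p (r + 1) ≤ q r + 1 := by
      by_contra hc
      push_neg at hc
      apply h2x2
      have hpr : p (r + 1) ≤ p r := hp (by omega)
      have hqr : q (r + 1) ≤ q r := hq (by omega)
      refine ⟨q r, r, ?_, ?_, ?_, ?_⟩ <;> rw [hskew] <;> omega
    omega
  have hsum : ∀ d, i + d ≤ j → (∑ b ∈ Finset.Icc i (i + d), (p b - q b)) + q (i + d) = p i + d := by
    intro d
    induction d with
    | zero =>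
      intro _
      rw [Nat.add_zero, Finset.Icc_self, Finset.sum_singleton]
      have := hle i
      omega
    | succ d ih =>
      intro h
      have ih' := ih (by omega)
      have hs := hstep (i + d) (by omega) (by omega)
      have hl := hle (i + d + 1)
      rw [show i + (d + 1) = (i + d) + 1 by omega,
        Finset.sum_Icc_succ_top (by omega : i ≤ i + d + 1)]
      omega
  have hskewcard : (cells p n \ cells q n).card = ∑ b ∈ range n, (p b - q b) := by
    have hsd : cells p n \ cells q n
        = (range n ×ˢ range n).filter (fun c => q c.2 ≤ c.1 ∧ c.1 < p c.2) := by
      ext ⟨a, b⟩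
      rw [hskew]
      simp only [Finset.mem_filter, Finset.mem_product, Finset.mem_range]
      have hpb : p b ≤ n := le_trans (hp (Nat.zero_le b)) hp0
      constructor
      · rintro ⟨hb, h1, h2⟩
        exact ⟨⟨by omega, hb⟩, h1, h2⟩
      · rintro ⟨⟨-, hb⟩, h1, h2⟩
        exact ⟨hb, h1, h2⟩
    rw [hsd, card_filter_prod]
    apply Finset.sum_congr rfl
    intro b hb
    have hpb : p b ≤ n := le_trans (hp (Nat.zero_le b)) hp0
    have : (range n).filter (fun a => q b ≤ a ∧ a < p b) = Finset.Ico (q b) (p b) := by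
      ext a
      simp only [Finset.mem_filter, Finset.mem_range, Finset.mem_Ico]
      omega
    rw [this, Nat.card_Ico]
  have hℓsum : ∑ b ∈ Finset.Icc i j, (p b - q b) = ℓ := by
    rw [← hcard, hskewcard]
    apply Finset.sum_subset
    · intro b hb
      rw [Finset.mem_Icc] at hb
      rw [Finset.mem_range]
      omega
    · intro b hb hbij
      rw [Finset.mem_range] at hb
      rw [Finset.mem_Icc] at hbij
      have := hout b hb (by omega)
      omega
  have hkey : ℓ + q j = p i + (j - i) := by
    have h1 := hsum (j - i) (by omega)
    rw [show i + (j - i) = j by omega] at h1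
    omega
  have hxl : q j + (n - 1 - j) + ℓ = p i + (n - 1 - i) := by omega
  refine ⟨q j + (n - 1 - j), ?_, ?_, ?_⟩
  · simp only [betaSet, Finset.mem_image, Finset.mem_range]
    exact ⟨j, hjn, rfl⟩
  · rw [hxl]
    intro hmem
    simp only [betaSet, Finset.mem_image, Finset.mem_range] at hmem
    obtain ⟨r, hr, hreq⟩ := hmem
    rcases lt_trichotomy r i with h | h | h
    · have hpq := hout r hr (Or.inl h)
      have : p i ≤ p r := hp (by omega)
      omega
    · subst h
      omega
    · have : q r ≤ q i := hq (by omega)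
      omega
  · ext t
    simp only [betaSet, Finset.mem_insert, Finset.mem_erase, Finset.mem_image, Finset.mem_range]
    constructor
    · rintro ⟨r, hr, rfl⟩
      rcases lt_trichotomy r i with h | h | h
      · -- r < i : p r = q r, value > x
        have hpq := hout r hr (Or.inl h)
        have hqq : q j ≤ q r := hq (by omega)
        refine Or.inr ⟨by omega, ⟨r, hr, by omega⟩⟩
      · subst h
        exact Or.inl (by omega)
      · rcases Nat.lt_or_ge j r with h2 | h2
        · -- r > j
          have hpq := hout r hr (Or.inr h2)
          have hqq : q r ≤ q j := hq (by omega)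
          refine Or.inr ⟨by omega, ⟨r, hr, by omega⟩⟩
        · -- i < r ≤ j
          have hs := hstep (r - 1) (by omega) (by omega)
          rw [show r - 1 + 1 = r by omega] at hs
          have hqq : q j ≤ q (r - 1) := hq (by omega)
          refine Or.inr ⟨by omega, ⟨r - 1, by omega, by omega⟩⟩
    · rintro (ht | ⟨htne, r, hr, rfl⟩)
      · exact ⟨i, hin, by omega⟩
      · rcases Nat.lt_or_ge r i with h | h
        · exact ⟨r, hr, by have := hout r hr (Or.inl h); omega⟩
        · rcases Nat.lt_or_ge r j with h2 | h2
          · -- i ≤ r < j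
            have hs := hstep r h h2
            exact ⟨r + 1, by omega, by omega⟩
          · rcases Nat.eq_or_lt_of_le h2 with h3 | h3
            · exfalso; apply htne; rw [← h3]
            · exact ⟨r, hr, by have := hout r hr (Or.inr h3); omega⟩


/-- If `λ ⊢ n = ℓs` can be written as `s` successive ribbons of length `ℓ`, then for any
integer `a`, the number of cells with hook length `≡ ±a (mod ℓ)` is `s·#{a, -a (mod ℓ)}`. -/
theorem hook_residue_pairs_count (n ℓ s : ℕ) (p : ℕ → ℕ) (hn : n = ℓ * s)
    (hp : IsPartitionOf n p) (hdec : RibbonDecomp p n ℓ s) :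
    ∀ a : ℤ,
      ((cells p n).filter fun c =>
          (hookLen p n c : ZMod ℓ) = (a : ZMod ℓ) ∨
          (hookLen p n c : ZMod ℓ) = -(a : ZMod ℓ)).card =
        s * (if (a : ZMod ℓ) = -(a : ZMod ℓ) then 1 else 2) := by
  intro a
  set α : ZMod ℓ := (a : ZMod ℓ) with hα
  obtain ⟨f, hanti, hzero, hfs, hrib⟩ := hdec
  rcases Nat.eq_zero_or_pos s with hs | hs
  · subst hs
    have hn0 : n = 0 := by omega
    subst hn0
    simp [cells]
  · have hℓ : 0 < ℓ := by
      by_contra h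
      have hl0 : ℓ = 0 := by omega
      have hn0 : n = 0 := by rw [hn, hl0, zero_mul]
      obtain ⟨-, -, hne, -, -⟩ := hrib 0 hs
      rw [hn0] at hne
      simp [cells] at hne
    have hn0 : 0 < n := hn ▸ Nat.mul_pos hℓ hs
    have hstep : ∀ i < s, ∀ j, f i j ≤ f (i + 1) j := fun i hi => (hrib i hi).1
    have le_p : ∀ m i, i + m = s → ∀ j, f i j ≤ p j := by
      intro m
      induction m with
      | zero => intro i hi j; have : i = s := by omega
                subst this; rw [hfs]
      | succ m ih => intro i hi j
                     exact le_trans (hstep i (by omega) j) (ih (i+1) (by omega) j)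
    have hp0 : p 0 ≤ n := by
      have := hp.2.2
      calc p 0 ≤ ∑ i ∈ Finset.range n, p i :=
        Finset.single_le_sum (f := p) (fun _ _ => Nat.zero_le _) (Finset.mem_range.2 hn0)
      _ = n := this
    have hfin : ∀ i, i ≤ s → f i 0 ≤ n := fun i hi =>
      le_trans (le_p (s - i) i (by omega) 0) hp0
    have main : ∀ i ≤ s, cnt ℓ α (betaSet (f i) n) = i * (if α = -α then 1 else 2) := by
      intro i
      induction i with
      | zero =>
        intro _
        have h0 : f 0 = fun _ => 0 := funext hzero
        rw [h0, cnt_zero, zero_mul]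
      | succ i ih =>
        intro hi
        obtain ⟨x, hx, hxl, heq⟩ := ribbon_beta n ℓ (f i) (f (i+1)) (hanti i) (hanti (i+1))
          (hfin (i+1) hi) (hrib i (by omega))
        rw [heq, cnt_move ℓ hℓ α _ x hx hxl, ih (by omega)]
        ring
    have final := main s le_rfl
    rw [hfs] at final
    rw [count_eq_cnt n ℓ α p hp.1 hp0, final]
end

section
/- Suppose λ/μ is a ribbon of length ℓ. Then for any integer a, #{c ∈ μ : h_c^μ ≡ ±a (mod ℓ)} + #{a mod ℓ, -a mod ℓ} = #{d ∈ λ : h_d^λ ≡ ±a (mod ℓ)}, where h^μ and h^λ denote hook lengths computed in μ and λ respectively. -/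
namespace HookAux

open Finset


def beta (p : ℕ → ℕ) (n i : ℕ) : ℕ := p i + (n - 1 - i)

def Bset (p : ℕ → ℕ) (n : ℕ) : Finset ℕ := (Finset.range n).image (beta p n)

def fcol (p : ℕ → ℕ) (n a : ℕ) : ℕ := a + (n - conjP p n a)

lemma conjP_le (p : ℕ → ℕ) (n a : ℕ) : conjP p n a ≤ n := by
  classical
  exact (Finset.card_filter_le _ _).trans_eq (Finset.card_range n)

lemma lt_conjP_iff (p : ℕ → ℕ) (n : ℕ) (hp : Antitone p) {a j : ℕ} (hj : j < n) :
    a < p j ↔ j < conjP p n a := by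
  classical
  constructor
  · intro h
    have hsub : Finset.range (j + 1) ⊆ (Finset.range n).filter fun b => a < p b := by
      intro k hk
      rw [Finset.mem_range] at hk
      refine Finset.mem_filter.mpr ⟨Finset.mem_range.mpr (by omega), ?_⟩
      exact lt_of_lt_of_le h (hp (by omega))
    have := Finset.card_le_card hsub
    simpa [conjP] using this
  · intro h
    by_contra hc
    push_neg at hc
    have hsub : ((Finset.range n).filter fun b => a < p b) ⊆ Finset.range j := by
      intro k hk
      rw [Finset.mem_filter, Finset.mem_range] at hk
      rw [Finset.mem_range]
      by_contra hk2
      push_neg at hk2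
      exact absurd (lt_of_lt_of_le hk.2 (hp hk2)) (by omega)
    have := Finset.card_le_card hsub
    rw [Finset.card_range] at this
    unfold conjP at h
    omega

lemma beta_strictAnti (p : ℕ → ℕ) (n : ℕ) (hp : Antitone p) {i j : ℕ} (hij : i < j)
    (hj : j < n) : beta p n j < beta p n i := by
  have := hp hij.le
  unfold beta
  omega

lemma beta_injOn (p : ℕ → ℕ) (n : ℕ) (hp : Antitone p) :
    Set.InjOn (beta p n) (Finset.range n) := by
  intro i hi j hj hij
  simp only [Finset.coe_range, Set.mem_Iio] at hi hj
  by_contra hne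
  rcases lt_or_gt_of_ne hne with h | h
  · exact absurd hij (by have := beta_strictAnti p n hp h hj; omega)
  · exact absurd hij (by have := beta_strictAnti p n hp h hi; omega)

lemma fcol_strictMono (p : ℕ → ℕ) (n : ℕ) : StrictMono (fcol p n) := by
  have hanti : ∀ a b : ℕ, a ≤ b → conjP p n b ≤ conjP p n a := by
    intro a b hab
    classical
    apply Finset.card_le_card
    intro k hk
    rw [Finset.mem_filter] at hk ⊢
    exact ⟨hk.1, by omega⟩
  intro a b hab
  have h1 := hanti a b hab.le
  have h2 := conjP_le p n a
  unfold fcol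
  omega


variable (p : ℕ → ℕ) (n : ℕ)

lemma fcol_facts (hp : Antitone p) {i a : ℕ} (hi : i < n) (ha : a < p i) :
    fcol p n a < beta p n i ∧ fcol p n a ∉ Bset p n ∧
      hookLen p n (a, i) = beta p n i - fcol p n a := by
  have hc1 : i < conjP p n a := (lt_conjP_iff p n hp hi).mp ha
  have hc2 : conjP p n a ≤ n := conjP_le p n a
  refine ⟨by unfold fcol beta; omega, ?_, ?_⟩
  · intro hmem
    rw [Bset, Finset.mem_image] at hmem
    obtain ⟨j, hj, hbe⟩ := hmem
    rw [Finset.mem_range] at hj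
    unfold beta fcol at hbe
    by_cases hpa : a < p j
    · have := (lt_conjP_iff p n hp hj).mp hpa
      omega
    · have : ¬ j < conjP p n a := fun h => hpa ((lt_conjP_iff p n hp hj).mpr h)
      omega
  · show (p i - a) + (conjP p n a - i) - 1 = _
    unfold beta fcol
    omega

lemma fcol_image (hp : Antitone p) {i : ℕ} (hi : i < n) :
    (Finset.range (p i)).image (fcol p n) =
      (Finset.range (beta p n i)).filter fun x => x ∉ Bset p n := by
  classical
  apply Finset.eq_of_subset_of_card_le
  · intro x hx
    rw [Finset.mem_image] at hx
    obtain ⟨a, ha, rfl⟩ := hx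
    rw [Finset.mem_range] at ha
    obtain ⟨h1, h2, _⟩ := fcol_facts p n hp hi ha
    exact Finset.mem_filter.mpr ⟨Finset.mem_range.mpr h1, h2⟩
  · have hcard1 : ((Finset.range (p i)).image (fcol p n)).card = p i := by
      rw [Finset.card_image_of_injective _ (fcol_strictMono p n).injective, Finset.card_range]
    have hsplit := Finset.card_filter_add_card_filter_not
      (s := Finset.range (beta p n i)) (p := fun x => x ∈ Bset p n)
    have hBin : (Finset.range (beta p n i)).filter (fun x => x ∈ Bset p n)
        = (Finset.Ioo i n).image (beta p n) := by
      ext x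
      simp only [Finset.mem_filter, Finset.mem_range, Finset.mem_image, Finset.mem_Ioo]
      constructor
      · rintro ⟨hx, hxB⟩
        rw [Bset, Finset.mem_image] at hxB
        obtain ⟨j, hj, rfl⟩ := hxB
        rw [Finset.mem_range] at hj
        refine ⟨j, ⟨?_, hj⟩, rfl⟩
        by_contra hji
        push_neg at hji
        rcases eq_or_lt_of_le hji with h | h
        · subst h; omega
        · have := beta_strictAnti p n hp h hi
          omega
      · rintro ⟨j, ⟨hij, hj⟩, rfl⟩
        exact ⟨beta_strictAnti p n hp hij hj, Finset.mem_image.mpr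
          ⟨j, Finset.mem_range.mpr hj, rfl⟩⟩
    have hIoo : ((Finset.Ioo i n).image (beta p n)).card = n - i - 1 := by
      rw [Finset.card_image_of_injOn, Nat.card_Ioo]
      intro x hx y hy hxy
      simp only [Finset.coe_Ioo, Set.mem_Ioo] at hx hy
      exact beta_injOn p n hp (by simp [Finset.coe_range]; omega)
        (by simp [Finset.coe_range]; omega) hxy
    rw [Finset.card_range] at hsplit
    have hbge : n - i - 1 ≤ beta p n i := by unfold beta; omega
    rw [hcard1]
    have : ((Finset.range (beta p n i)).filter fun x => x ∉ Bset p n).card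
        = beta p n i - (n - i - 1) := by
      rw [hBin, hIoo] at hsplit
      omega
    rw [this]
    unfold beta
    omega

lemma row_count (hp : Antitone p) {i : ℕ} (hi : i < n)
    (P : ℕ → Prop) [DecidablePred P] :
    ((Finset.range (p i)).filter fun a => P (hookLen p n (a, i))).card
      = ((Finset.range (beta p n i)).filter
          fun x => x ∉ Bset p n ∧ P (beta p n i - x)).card := by
  classical
  apply Finset.card_bij (fun a _ => fcol p n a)
  · intro a ha
    rw [Finset.mem_filter, Finset.mem_range] at ha
    obtain ⟨h1, h2, h3⟩ := fcol_facts p n hp hi ha.1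
    refine Finset.mem_filter.mpr ⟨Finset.mem_range.mpr h1, h2, ?_⟩
    rw [← h3]; exact ha.2
  · intro a _ b _ h
    exact (fcol_strictMono p n).injective h
  · intro x hx
    rw [Finset.mem_filter, Finset.mem_range] at hx
    obtain ⟨hx1, hx2, hx3⟩ := hx
    have : x ∈ (Finset.range (p i)).image (fcol p n) := by
      rw [fcol_image p n hp hi]
      exact Finset.mem_filter.mpr ⟨Finset.mem_range.mpr hx1, hx2⟩
    rw [Finset.mem_image] at this
    obtain ⟨a, ha, rfl⟩ := this
    rw [Finset.mem_range] at ha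
    obtain ⟨_, _, h3⟩ := fcol_facts p n hp hi ha
    refine ⟨a, Finset.mem_filter.mpr ⟨Finset.mem_range.mpr ha, ?_⟩, rfl⟩
    rw [h3]; exact hx3


lemma total_count (p : ℕ → ℕ) (n : ℕ) (hp : Antitone p) (hpn : ∀ i < n, p i ≤ n)
    (P : ℕ → Prop) [DecidablePred P] :
    ((cells p n).filter fun c => P (hookLen p n c)).card
      = ∑ y ∈ Bset p n, ((Finset.range y).filter
          fun x => x ∉ Bset p n ∧ P (y - x)).card := by
  classical
  have hfib : ∀ c ∈ (cells p n).filter fun c => P (hookLen p n c), c.2 ∈ Finset.range n := by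
    intro c hc
    rw [Finset.mem_filter] at hc
    have := hc.1
    rw [cells, Finset.mem_filter, Finset.mem_product] at this
    exact this.1.2
  rw [Finset.card_eq_sum_card_fiberwise hfib]
  have hsum : ∑ y ∈ Bset p n, ((Finset.range y).filter
        fun x => x ∉ Bset p n ∧ P (y - x)).card
      = ∑ i ∈ Finset.range n, ((Finset.range (beta p n i)).filter
        fun x => x ∉ Bset p n ∧ P (beta p n i - x)).card := by
    rw [Bset]
    exact Finset.sum_image (fun i hi j hj h => beta_injOn p n hp
      (by simpa using hi) (by simpa using hj) h)
  rw [hsum]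
  apply Finset.sum_congr rfl
  intro i hi
  rw [Finset.mem_range] at hi
  rw [← row_count p n hp hi P]
  have hfibeq : ((cells p n).filter fun c => P (hookLen p n c)).filter
        (fun c => c.2 = i)
      = ((Finset.range (p i)).filter fun a => P (hookLen p n (a, i))).image
          (fun a => (a, i)) := by
    ext c
    simp only [Finset.mem_filter, Finset.mem_image, Finset.mem_range, cells,
      Finset.mem_product]
    constructor
    · rintro ⟨⟨⟨⟨h1, h2⟩, h3⟩, h4⟩, h5⟩
      exact ⟨c.1, ⟨h5 ▸ h3, h5 ▸ h4⟩, by rw [← h5]⟩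
    · rintro ⟨a, ⟨ha, hP⟩, rfl⟩
      exact ⟨⟨⟨⟨(lt_of_lt_of_le ha (hpn i hi)), hi⟩, ha⟩, hP⟩, rfl⟩
  rw [hfibeq, Finset.card_image_of_injective]
  intro a b h
  simpa using h


variable (B : Finset ℕ) (b l : ℕ) (P : ℕ → Prop) [DecidablePred P]

lemma mem_insert_erase_iff (hl : 0 < l) (hb : b ∈ B) (hbl : b + l ∉ B) {x : ℕ}
    (hx1 : x ≠ b) (hx2 : x ≠ b + l) :
    (x ∈ insert (b+l) (B.erase b)) ↔ (x ∈ B) := by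
  simp [Finset.mem_insert, Finset.mem_erase, hx1, hx2]

lemma delta_row (hl : 0 < l) (hb : b ∈ B) (hbl : b + l ∉ B)
    (hper : ∀ r, P (r + l) ↔ P r)
    {y : ℕ} (hy : y ∈ B.erase b) :
    ((Finset.range y).filter fun x => x ∉ insert (b+l) (B.erase b) ∧ P (y-x)).card
      = ((Finset.range y).filter fun x => x ∉ B ∧ P (y-x)).card
        + (if b < y ∧ y < b + l ∧ P (y - b) then 1 else 0) := by
  classical
  rw [Finset.mem_erase] at hy
  have hyne : y ≠ b + l := fun h => hbl (h ▸ hy.2)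
  have hbB' : b ∉ insert (b+l) (B.erase b) := by
    simp [Finset.mem_insert, Finset.mem_erase]
    omega
  have hblB' : b + l ∈ insert (b+l) (B.erase b) := Finset.mem_insert_self _ _
  rcases le_or_gt y b with hyb | hby
  · rw [if_neg (by omega), Nat.add_zero]
    congr 1
    apply Finset.filter_congr
    intro x hx
    rw [Finset.mem_range] at hx
    rw [mem_insert_erase_iff B b l hl hb hbl (by omega) (by omega)]
  · rcases lt_or_ge y (b + l) with hylt | hyge
    · rw [Finset.card_filter, Finset.card_filter]
      have hbm : b ∈ Finset.range y := Finset.mem_range.mpr hby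
      rw [← Finset.add_sum_erase _ _ hbm, ← Finset.add_sum_erase _ _ hbm]
      have hcong : ∀ x ∈ (Finset.range y).erase b,
          (if x ∉ insert (b+l) (B.erase b) ∧ P (y-x) then 1 else 0)
            = (if x ∉ B ∧ P (y-x) then 1 else 0) := by
        intro x hx
        rw [Finset.mem_erase, Finset.mem_range] at hx
        simp only [mem_insert_erase_iff B b l hl hb hbl hx.1 (by omega : x ≠ b + l)]
      rw [Finset.sum_congr rfl hcong]
      by_cases hP : P (y - b)
      · simp only [hbB', hb, hP, hby, hylt, not_true, not_false_iff, true_and,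
          and_true, and_self, if_true, false_and, if_false]
        omega
      · simp only [hbB', hb, hP, not_true, not_false_iff, true_and,
          and_false, false_and, if_false]
        omega
    · have hyl : b + l < y := by omega
      rw [if_neg (by omega), Finset.card_filter, Finset.card_filter]
      have hbm : b ∈ Finset.range y := Finset.mem_range.mpr hby
      have hblm : b + l ∈ (Finset.range y).erase b := by
        rw [Finset.mem_erase, Finset.mem_range]; omega
      rw [← Finset.add_sum_erase _ _ hbm, ← Finset.add_sum_erase _ _ hbm,
        ← Finset.add_sum_erase _ _ hblm, ← Finset.add_sum_erase _ _ hblm]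
      have hcong : ∀ x ∈ ((Finset.range y).erase b).erase (b+l),
          (if x ∉ insert (b+l) (B.erase b) ∧ P (y-x) then 1 else 0)
            = (if x ∉ B ∧ P (y-x) then 1 else 0) := by
        intro x hx
        rw [Finset.mem_erase, Finset.mem_erase, Finset.mem_range] at hx
        simp only [mem_insert_erase_iff B b l hl hb hbl hx.2.1 hx.1]
      rw [Finset.sum_congr rfl hcong]
      have hPiff : P (y - b) ↔ P (y - (b+l)) := by
        have h1 : y - b = (y - (b+l)) + l := by omega
        rw [h1]; exact hper _
      simp only [hbB', hb, hbl, hblB', not_true, false_and, if_false,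
        not_false_iff, true_and]
      by_cases hP : P (y - b)
      · rw [if_pos hP, if_pos (hPiff.mp hP)]; omega
      · rw [if_neg hP, if_neg (fun h => hP (hPiff.mpr h))]; omega


lemma delta_top (hl : 0 < l) (hb : b ∈ B) (hbl : b + l ∉ B)
    (hper : ∀ r, P (r + l) ↔ P r) :
    ((Finset.range (b+l)).filter
        fun x => x ∉ insert (b+l) (B.erase b) ∧ P (b+l-x)).card
      = ((Finset.range b).filter fun x => x ∉ B ∧ P (b-x)).card
        + ((if P l then 1 else 0)
          + ∑ j ∈ Finset.Ico 1 l, if b+j ∉ B ∧ P (l - j) then 1 else 0) := by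
  classical
  have hbB' : b ∉ insert (b+l) (B.erase b) := by
    simp [Finset.mem_insert, Finset.mem_erase]
    omega
  rw [Finset.card_filter, Finset.card_filter]
  rw [Finset.range_eq_Ico, ← Finset.sum_Ico_consecutive _ (Nat.zero_le b) (Nat.le_add_right b l)]
  have h1 : ∑ x ∈ Finset.Ico 0 b,
      (if x ∉ insert (b+l) (B.erase b) ∧ P (b+l-x) then 1 else 0)
      = ∑ x ∈ Finset.Ico 0 b, (if x ∉ B ∧ P (b-x) then 1 else 0) := by
    apply Finset.sum_congr rfl
    intro x hx
    rw [Finset.mem_Ico] at hx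
    have he : b + l - x = (b - x) + l := by omega
    simp only [mem_insert_erase_iff B b l hl hb hbl (by omega : x ≠ b)
      (by omega : x ≠ b + l), he, hper]
  have h2 : ∑ x ∈ Finset.Ico b (b+l),
      (if x ∉ insert (b+l) (B.erase b) ∧ P (b+l-x) then 1 else 0)
      = (if P l then 1 else 0)
        + ∑ j ∈ Finset.Ico 1 l, (if b+j ∉ B ∧ P (l - j) then 1 else 0) := by
    rw [Finset.sum_Ico_eq_sum_range]
    have hll : b + l - b = l := by omega
    rw [hll]
    obtain ⟨m, rfl⟩ : ∃ m, l = m + 1 := ⟨l - 1, by omega⟩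
    rw [Finset.sum_range_succ']
    have hg0 : (if b + 0 ∉ insert (b+(m+1)) (B.erase b) ∧ P (b+(m+1)-(b+0)) then 1 else 0)
        = (if P (m+1) then 1 else 0) := by
      simp only [Nat.add_zero, show b + (m+1) - b = m+1 from by omega, hbB',
        not_false_iff, true_and]
    rw [hg0]
    have h3 : ∑ j ∈ Finset.Ico 1 (m+1), (if b+j ∉ B ∧ P (m+1 - j) then 1 else 0)
        = ∑ i ∈ Finset.range m, (if b+(i+1) ∉ B ∧ P (m+1 - (i+1)) then 1 else 0) := by
      rw [Finset.sum_Ico_eq_sum_range]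
      have hm1 : m + 1 - 1 = m := by omega
      rw [hm1]
      apply Finset.sum_congr rfl
      intro i _
      have e : 1 + i = i + 1 := by omega
      rw [e]
    rw [h3]
    have h4 : ∀ i ∈ Finset.range m,
        (if b+(i+1) ∉ insert (b+(m+1)) (B.erase b) ∧ P (b+(m+1)-(b+(i+1))) then 1 else 0)
          = (if b+(i+1) ∉ B ∧ P (m+1 - (i+1)) then 1 else 0) := by
      intro i hi
      rw [Finset.mem_range] at hi
      have he : b+(m+1)-(b+(i+1)) = m+1 - (i+1) := by omega
      simp only [he, mem_insert_erase_iff B b (m+1) hl hb hbl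
        (by omega : b+(i+1) ≠ b) (by omega : b+(i+1) ≠ b+(m+1))]
    rw [Finset.sum_congr rfl h4]
    omega
  rw [h1, h2, Finset.range_eq_Ico]

lemma delta_mid (hl : 0 < l) (hb : b ∈ B) (hbl : b + l ∉ B) :
    ∑ y ∈ B.erase b, (if b < y ∧ y < b + l ∧ P (y - b) then 1 else 0)
      = ∑ j ∈ Finset.Ico 1 l, (if b+j ∈ B ∧ P j then 1 else 0) := by
  classical
  rw [← Finset.card_filter, ← Finset.card_filter]
  symm
  apply Finset.card_bij (fun j _ => b + j)
  · intro j hj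
    rw [Finset.mem_filter, Finset.mem_Ico] at hj
    refine Finset.mem_filter.mpr ⟨Finset.mem_erase.mpr ⟨by omega, hj.2.1⟩, ?_, ?_, ?_⟩
    · omega
    · omega
    · have : b + j - b = j := by omega
      rw [this]; exact hj.2.2
  · intro x _ y _ h
    omega
  · intro y hy
    rw [Finset.mem_filter, Finset.mem_erase] at hy
    obtain ⟨⟨hyb, hyB⟩, h1, h2, h3⟩ := hy
    refine ⟨y - b, Finset.mem_filter.mpr ⟨Finset.mem_Ico.mpr ⟨by omega, by omega⟩, ?_, h3⟩, by omega⟩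
    have e : b + (y - b) = y := by omega
    rw [e]; exact hyB

lemma key_delta (hl : 0 < l) (hb : b ∈ B) (hbl : b + l ∉ B)
    (hper : ∀ r, P (r + l) ↔ P r)
    (hsym : ∀ j, 0 < j → j < l → (P j ↔ P (l - j))) :
    ∑ y ∈ insert (b+l) (B.erase b), ((Finset.range y).filter
        fun x => x ∉ insert (b+l) (B.erase b) ∧ P (y-x)).card
      = (∑ y ∈ B, ((Finset.range y).filter fun x => x ∉ B ∧ P (y-x)).card)
        + ((Finset.range l).filter P).card := by
  classical
  have hblE : b + l ∉ B.erase b := fun h => hbl (Finset.mem_of_mem_erase h)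
  rw [Finset.sum_insert hblE]
  rw [← Finset.add_sum_erase _ _ hb]
  have hrows : ∑ y ∈ B.erase b, ((Finset.range y).filter
        fun x => x ∉ insert (b+l) (B.erase b) ∧ P (y-x)).card
      = (∑ y ∈ B.erase b, ((Finset.range y).filter fun x => x ∉ B ∧ P (y-x)).card)
        + ∑ y ∈ B.erase b, (if b < y ∧ y < b + l ∧ P (y - b) then 1 else 0) := by
    rw [← Finset.sum_add_distrib]
    exact Finset.sum_congr rfl fun y hy => delta_row B b l P hl hb hbl hper hy
  rw [hrows, delta_mid B b l P hl hb hbl,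
    delta_top B b l P hl hb hbl hper]
  have hK : ((Finset.range l).filter P).card
      = (if P l then 1 else 0) + ∑ j ∈ Finset.Ico 1 l, (if P j then 1 else 0) := by
    rw [Finset.card_filter, Finset.range_eq_Ico,
      Finset.sum_eq_sum_Ico_succ_bot hl]
    have : P l ↔ P 0 := by have := hper 0; simpa using this
    simp only [this, Nat.zero_add]
  rw [hK]
  have hcomb : ∑ j ∈ Finset.Ico 1 l, (if b+j ∉ B ∧ P (l - j) then 1 else 0)
        + ∑ j ∈ Finset.Ico 1 l, (if b+j ∈ B ∧ P j then 1 else 0)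
      = ∑ j ∈ Finset.Ico 1 l, (if P j then 1 else 0) := by
    rw [← Finset.sum_add_distrib]
    apply Finset.sum_congr rfl
    intro j hj
    rw [Finset.mem_Ico] at hj
    have hs := hsym j hj.1 hj.2
    by_cases hm : b + j ∈ B
    · by_cases hP : P j <;> simp [hm, hP]
    · by_cases hP : P j
      · simp [hm, hP, hs.mp hP]
      · have hP2 : ¬ P (l - j) := fun h => hP (hs.mpr h)
        simp [hm, hP, hP2]
  omega


lemma memS_iff {p q : ℕ → ℕ} {n : ℕ} (hpn : ∀ i < n, p i ≤ n) {c : ℕ × ℕ} :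
    c ∈ cells p n \ cells q n ↔ c.2 < n ∧ q c.2 ≤ c.1 ∧ c.1 < p c.2 := by
  rw [Finset.mem_sdiff, cells, cells, Finset.mem_filter, Finset.mem_filter,
    Finset.mem_product, Finset.mem_range, Finset.mem_range]
  constructor
  · rintro ⟨⟨⟨h1, h2⟩, h3⟩, h4⟩
    refine ⟨h2, ?_, h3⟩
    by_contra hcon
    exact h4 ⟨⟨h1, h2⟩, by omega⟩
  · rintro ⟨h1, h2, h3⟩
    have hc1 : c.1 < n := lt_of_lt_of_le h3 (hpn _ h1)
    exact ⟨⟨⟨hc1, h1⟩, h3⟩, fun h => by omega⟩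

lemma ribbon_structure (p q : ℕ → ℕ) (n l : ℕ) (hp : Antitone p) (hq : Antitone q)
    (hle : ∀ i, q i ≤ p i) (hpn : ∀ i < n, p i ≤ n)
    (hcard : (cells p n \ cells q n).card = l)
    (hne : (cells p n \ cells q n).Nonempty)
    (hconn : ∀ c ∈ cells p n \ cells q n, ∀ d ∈ cells p n \ cells q n,
      Relation.ReflTransGen (fun x y => x ∈ cells p n \ cells q n ∧
        y ∈ cells p n \ cells q n ∧ AdjCell x y) c d)
    (h2x2 : ¬ ∃ a b : ℕ, (a, b) ∈ cells p n \ cells q n ∧ (a + 1, b) ∈ cells p n \ cells q n ∧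
      (a, b + 1) ∈ cells p n \ cells q n ∧ (a + 1, b + 1) ∈ cells p n \ cells q n) :
    ∃ r0 r1 : ℕ, r0 ≤ r1 ∧ r1 < n ∧
      (∀ i < n, (i < r0 ∨ r1 < i) → p i = q i) ∧
      (∀ i, r0 ≤ i → i ≤ r1 → q i < p i) ∧
      (∀ i, r0 ≤ i → i < r1 → q i + 1 = p (i+1)) ∧
      l = (p r0 - q r1) + (r1 - r0) := by
  classical
  set S := cells p n \ cells q n with hS
  set R := (Finset.range n).filter (fun i => q i < p i) with hR
  have hmemR : ∀ i, i ∈ R ↔ (i < n ∧ q i < p i) := by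
    intro i; rw [hR, Finset.mem_filter, Finset.mem_range]
  have hRne : R.Nonempty := by
    obtain ⟨c, hc⟩ := hne
    rw [memS_iff hpn] at hc
    exact ⟨c.2, (hmemR c.2).mpr ⟨hc.1, by omega⟩⟩
  set r0 := R.min' hRne with hr0
  set r1 := R.max' hRne with hr1
  have hr0R : r0 ∈ R := R.min'_mem hRne
  have hr1R : r1 ∈ R := R.max'_mem hRne
  have hr01 : r0 ≤ r1 := R.min'_le _ hr1R
  have hr1n : r1 < n := ((hmemR r1).mp hr1R).1
  -- no 2x2 consequence
  have hstep : ∀ i, i + 1 < n → p (i+1) ≤ q i + 1 := by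
    intro i hi
    by_contra hcon
    push_neg at hcon
    apply h2x2
    refine ⟨q i, i, ?_, ?_, ?_, ?_⟩ <;> rw [memS_iff hpn] <;> simp only
    · refine ⟨by omega, le_refl _, ?_⟩
      calc q i < p (i+1) := by omega
        _ ≤ p i := hp (by omega)
    · refine ⟨by omega, by omega, ?_⟩
      calc q i + 1 < p (i+1) := by omega
        _ ≤ p i := hp (by omega)
    · exact ⟨hi, hq (by omega), by omega⟩
    · exact ⟨hi, by have := hq (show i ≤ i + 1 by omega); omega, by omega⟩
  -- connectivity consequence
  have hcut : ∀ i, r0 ≤ i → i < r1 → q i < p (i+1) := by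
    intro i hi0 hi1
    by_contra hcon
    push_neg at hcon
    have hc : (q r1, r1) ∈ S := by
      rw [hS, memS_iff hpn]
      exact ⟨hr1n, le_refl _, ((hmemR r1).mp hr1R).2⟩
    have hd : (q r0, r0) ∈ S := by
      rw [hS, memS_iff hpn]
      exact ⟨by omega, le_refl _, ((hmemR r0).mp hr0R).2⟩
    have hpath := hconn _ hc _ hd
    have hinv : ∀ e : ℕ × ℕ, Relation.ReflTransGen (fun x y => x ∈ S ∧ y ∈ S ∧ AdjCell x y)
        (q r1, r1) e → i < e.2 := by
      intro e he
      induction he with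
      | refl => simpa using hi1
      | tail h1 h2 ih =>
        rename_i b e'
        obtain ⟨hbS, heS, hadj⟩ := h2
        by_contra hle2
        push_neg at hle2
        rw [hS, memS_iff hpn] at hbS heS
        rcases hadj with ⟨hcol, hrow⟩ | ⟨hrow, _⟩
        · have hrow2 : e'.2 + 1 = b.2 := by omega
          have hb2 : b.2 = i + 1 := by omega
          have he2 : e'.2 = i := by omega
          rw [hb2] at hbS
          rw [he2] at heS
          omega
        · omega
    have := hinv _ hpath
    simp at this
    omega
  have heqm : ∀ i, r0 ≤ i → i < r1 → q i + 1 = p (i+1) := by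
    intro i h1 h2
    have := hcut i h1 h2
    have := hstep i (by omega)
    omega
  have hin : ∀ i, r0 ≤ i → i ≤ r1 → q i < p i := by
    intro i h1 h2
    rcases eq_or_lt_of_le h2 with h | h
    · rw [h]; exact ((hmemR r1).mp hr1R).2
    · calc q i < p (i+1) := hcut i h1 h
        _ ≤ p i := hp (by omega)
  have hout : ∀ i < n, (i < r0 ∨ r1 < i) → p i = q i := by
    intro i hi hi2
    have hniR : i ∉ R := by
      intro hiR
      rcases hi2 with h | h
      · exact absurd (R.min'_le _ hiR) (by omega)
      · exact absurd (R.le_max' _ hiR) (by omega)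
    rw [hmemR] at hniR
    push_neg at hniR
    exact le_antisymm (hniR hi) (hle i)
  -- cardinality
  have hfib : S.card = ∑ i ∈ Finset.range n, (p i - q i) := by
    rw [Finset.card_eq_sum_card_fiberwise (f := fun c => c.2) (t := Finset.range n)
      (fun c hc => Finset.mem_range.mpr ((memS_iff hpn).mp hc).1)]
    apply Finset.sum_congr rfl
    intro i hirange
    rw [Finset.mem_range] at hirange
    have : S.filter (fun c => c.2 = i) = (Finset.Ico (q i) (p i)).image (fun a => (a, i)) := by
      ext c
      rw [Finset.mem_filter, hS, memS_iff hpn, Finset.mem_image]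
      constructor
      · rintro ⟨⟨h1, h2, h3⟩, h4⟩
        exact ⟨c.1, Finset.mem_Ico.mpr ⟨h4 ▸ h2, h4 ▸ h3⟩, by rw [← h4]⟩
      · rintro ⟨a, ha, rfl⟩
        rw [Finset.mem_Ico] at ha
        have : q i < p i := by omega
        exact ⟨⟨hirange, ha.1, ha.2⟩, rfl⟩
    rw [this, Finset.card_image_of_injective _ (fun a b h => by simpa using h), Nat.card_Ico]
  have htel : ∀ m, r0 + m ≤ r1 →
      ∑ i ∈ Finset.Icc r0 (r0 + m), (p i - q i) = (p r0 - q (r0 + m)) + m := by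
    intro m
    induction m with
    | zero =>
      intro _
      simp [Finset.Icc_self]
    | succ k ih =>
      intro hk
      have hik := ih (by omega)
      rw [show r0 + (k+1) = (r0 + k) + 1 from by omega,
        Finset.sum_Icc_succ_top (by omega : r0 ≤ r0 + k + 1), hik]
      have h1 := heqm (r0 + k) (by omega) (by omega)
      have h2 := hin (r0 + k) (by omega) (by omega)
      have h3 := hin (r0 + k + 1) (by omega) (by omega)
      have h4 : q (r0 + k) ≤ q r0 := hq (by omega)
      have h5 : p r0 ≥ p (r0 + k) := hp (by omega)
      have h6 : q (r0 + k + 1) ≤ q (r0 + k) := hq (by omega)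
      omega
  have hsum0 : ∑ i ∈ Finset.range n, (p i - q i)
      = ∑ i ∈ Finset.Icc r0 r1, (p i - q i) := by
    symm
    apply Finset.sum_subset
    · intro i hi
      rw [Finset.mem_Icc] at hi
      rw [Finset.mem_range]
      omega
    · intro i hi1 hi2
      rw [Finset.mem_range] at hi1
      rw [Finset.mem_Icc] at hi2
      have := hout i hi1 (by omega)
      omega
  refine ⟨r0, r1, hr01, hr1n, hout, hin, heqm, ?_⟩
  have := htel (r1 - r0) (by omega)
  rw [show r0 + (r1 - r0) = r1 from by omega] at this
  rw [← hcard, hfib, hsum0, this]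


section BsetEq
variable (p q : ℕ → ℕ) (n l r0 r1 : ℕ)

lemma Bset_facts (hp : Antitone p) (hq : Antitone q) (hl : 0 < l)
    (hr01 : r0 ≤ r1) (hr1n : r1 < n)
    (hout : ∀ i < n, (i < r0 ∨ r1 < i) → p i = q i)
    (heqm : ∀ i, r0 ≤ i → i < r1 → q i + 1 = p (i+1))
    (hbl : beta p n r0 = beta q n r1 + l) :
    Bset p n = insert (beta q n r1 + l) ((Bset q n).erase (beta q n r1))
      ∧ beta q n r1 ∈ Bset q n ∧ beta q n r1 + l ∉ Bset q n := by
  have hmid : ∀ i, r0 ≤ i → i < r1 → beta q n i = beta p n (i+1) := by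
    intro i h1 h2
    have := heqm i h1 h2
    unfold beta
    omega
  have houtb : ∀ i < n, (i < r0 ∨ r1 < i) → beta p n i = beta q n i := by
    intro i h1 h2
    have := hout i h1 h2
    unfold beta
    omega
  have hqinj : ∀ i < n, ∀ j < n, beta q n i = beta q n j → i = j := by
    intro i hi j hj h
    by_contra hne
    rcases lt_or_gt_of_ne hne with hlt | hlt
    · have := beta_strictAnti q n hq hlt hj; omega
    · have := beta_strictAnti q n hq hlt hi; omega
  have hblnot : beta q n r1 + l ∉ Bset q n := by
    rw [Bset, Finset.mem_image]
    rintro ⟨j, hj, hbe⟩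
    rw [Finset.mem_range] at hj
    rcases lt_or_ge j r0 with h | h
    · have h2 := houtb j hj (Or.inl h)
      have h3 := beta_strictAnti p n hp h (by omega : r0 < n)
      omega
    · rcases lt_or_ge j r1 with h2 | h2
      · have h3 := hmid j h h2
        have h4 : beta p n (j+1) < beta p n r0 ∨ j + 1 = r0 := by
          rcases lt_or_eq_of_le (by omega : r0 ≤ j + 1) with hh | hh
          · exact Or.inl (beta_strictAnti p n hp hh (by omega))
          · exact Or.inr hh.symm
        rcases h4 with h4 | h4
        · omega
        · omega
      · rcases eq_or_lt_of_le h2 with h3 | h3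
        · rw [← h3] at hbe; omega
        · have h4 := houtb j hj (Or.inr h3)
          have h5 : beta p n j < beta p n r0 := beta_strictAnti p n hp (by omega) hj
          omega
  refine ⟨?_, Finset.mem_image.mpr ⟨r1, Finset.mem_range.mpr hr1n, rfl⟩, hblnot⟩
  ext y
  rw [Finset.mem_insert, Finset.mem_erase, Bset, Bset, Finset.mem_image, Finset.mem_image]
  constructor
  · rintro ⟨i, hi, rfl⟩
    rw [Finset.mem_range] at hi
    rcases lt_or_ge i r0 with h | h
    · refine Or.inr ⟨?_, ⟨i, Finset.mem_range.mpr hi, (houtb i hi (Or.inl h)).symm⟩⟩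
      rw [houtb i hi (Or.inl h)]
      intro hcon
      have := hqinj i hi r1 hr1n hcon
      omega
    · rcases eq_or_lt_of_le h with h2 | h2
      · exact Or.inl (by rw [← h2, hbl])
      · rcases le_or_gt i r1 with h3 | h3
        · have h4 := hmid (i-1) (by omega) (by omega)
          rw [show i - 1 + 1 = i from by omega] at h4
          refine Or.inr ⟨?_, ⟨i-1, Finset.mem_range.mpr (by omega), h4⟩⟩
          rw [← h4]
          intro hcon
          have := hqinj (i-1) (by omega) r1 hr1n hcon
          omega
        · refine Or.inr ⟨?_, ⟨i, Finset.mem_range.mpr hi, (houtb i hi (Or.inr h3)).symm⟩⟩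
          rw [houtb i hi (Or.inr h3)]
          intro hcon
          have := hqinj i hi r1 hr1n hcon
          omega
  · rintro (h | ⟨hne, j, hj, rfl⟩)
    · exact ⟨r0, Finset.mem_range.mpr (by omega), by rw [hbl, h]⟩
    · rw [Finset.mem_range] at hj
      have hjr1 : j ≠ r1 := fun h => hne (by rw [h])
      rcases lt_or_ge j r0 with h | h
      · exact ⟨j, Finset.mem_range.mpr hj, houtb j hj (Or.inl h)⟩
      · rcases lt_or_ge j r1 with h2 | h2
        · exact ⟨j+1, Finset.mem_range.mpr (by omega), (hmid j h h2).symm⟩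
        · have h3 : r1 < j := by omega
          exact ⟨j, Finset.mem_range.mpr hj, houtb j hj (Or.inr h3)⟩

end BsetEq

lemma card_res (l : ℕ) (hl : 0 < l) (z : ZMod l) :
    ((Finset.range l).filter fun r : ℕ => (r : ZMod l) = z ∨ (r : ZMod l) = -z).card
      = if z = -z then 1 else 2 := by
  classical
  haveI : NeZero l := ⟨by omega⟩
  have himg : (Finset.range l).filter (fun r : ℕ => (r : ZMod l) = z ∨ (r : ZMod l) = -z)
      = ({z, -z} : Finset (ZMod l)).image ZMod.val := by
    ext r
    rw [Finset.mem_filter, Finset.mem_range, Finset.mem_image]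
    constructor
    · rintro ⟨hr, hP⟩
      rcases hP with h | h
      · exact ⟨z, by simp, by rw [← h, ZMod.val_cast_of_lt hr]⟩
      · exact ⟨-z, by simp, by rw [← h, ZMod.val_cast_of_lt hr]⟩
    · rintro ⟨w, hw, rfl⟩
      refine ⟨ZMod.val_lt w, ?_⟩
      rw [ZMod.natCast_rightInverse w]
      simpa using hw
  rw [himg, Finset.card_image_of_injective _ ZMod.natCast_rightInverse.injective]
  by_cases hz : z = -z
  · rw [if_pos hz, ← hz]
    simp
  · rw [Finset.card_pair hz, if_neg hz]



lemma main_aux (p q : ℕ → ℕ) (n l : ℕ) (hpA : Antitone p) (hq : Antitone q)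
    (hle : ∀ i, q i ≤ p i) (hpn : ∀ i < n, p i ≤ n) (hl : 0 < l)
    (hcard : (cells p n \ cells q n).card = l)
    (hne : (cells p n \ cells q n).Nonempty)
    (hconn : ∀ c ∈ cells p n \ cells q n, ∀ d ∈ cells p n \ cells q n,
      Relation.ReflTransGen (fun x y => x ∈ cells p n \ cells q n ∧
        y ∈ cells p n \ cells q n ∧ AdjCell x y) c d)
    (h2x2 : ¬ ∃ a b : ℕ, (a, b) ∈ cells p n \ cells q n ∧
      (a + 1, b) ∈ cells p n \ cells q n ∧
      (a, b + 1) ∈ cells p n \ cells q n ∧ (a + 1, b + 1) ∈ cells p n \ cells q n)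
    (P : ℕ → Prop) [DecidablePred P]
    (hper : ∀ r, P (r + l) ↔ P r)
    (hsym : ∀ j, 0 < j → j < l → (P j ↔ P (l - j))) :
    ((cells q n).filter fun c => P (hookLen q n c)).card
        + ((Finset.range l).filter P).card
      = ((cells p n).filter fun c => P (hookLen p n c)).card := by
  classical
  have hqn : ∀ i < n, q i ≤ n := fun i hi => le_trans (hle i) (hpn i hi)
  obtain ⟨r0, r1, hr01, hr1n, hout, hin, heqm, hlen⟩ :=
    ribbon_structure p q n l hpA hq hle hpn hcard hne hconn h2x2
  have hbl : beta p n r0 = beta q n r1 + l := by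
    have h1 : q r1 < p r1 := hin r1 hr01 le_rfl
    have h2 : p r1 ≤ p r0 := hpA hr01
    have h3 : q r1 ≤ q r0 := hq hr01
    have h4 : q r0 < p r0 := hin r0 le_rfl hr01
    unfold beta
    omega
  obtain ⟨hBeq, hbmem, hblnot⟩ :=
    Bset_facts p q n l r0 r1 hpA hq hl hr01 hr1n hout heqm hbl
  rw [total_count p n hpA hpn P, total_count q n hq hqn P, hBeq]
  exact (key_delta (Bset q n) (beta q n r1) l P hl hbmem hblnot hper hsym).symm

end HookAux

/-- If `λ/μ` is a ribbon of length `ℓ`, then for any integer `a`,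
`#{c ∈ μ : h_c^μ ≡ ±a (mod ℓ)} + #{a, -a (mod ℓ)} = #{d ∈ λ : h_d^λ ≡ ±a (mod ℓ)}`. -/
theorem hook_residue_pairs_ribbon_step (n ℓ : ℕ) (p q : ℕ → ℕ)
    (hp : IsPartitionOf n p) (hq : Antitone q)
    (hrib : IsRibbon q p n ℓ) :
    ∀ a : ℤ,
      ((cells q n).filter fun c =>
          (hookLen q n c : ZMod ℓ) = (a : ZMod ℓ) ∨
          (hookLen q n c : ZMod ℓ) = -(a : ZMod ℓ)).card +
        (if (a : ZMod ℓ) = -(a : ZMod ℓ) then 1 else 2) =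
      ((cells p n).filter fun d =>
          (hookLen p n d : ZMod ℓ) = (a : ZMod ℓ) ∨
          (hookLen p n d : ZMod ℓ) = -(a : ZMod ℓ)).card := by
  classical
  obtain ⟨hpA, hpn0, hpsum⟩ := hp
  obtain ⟨hle, hcard, hne, hconn, h2x2⟩ := hrib
  intro a
  have hn : 0 < n := by
    obtain ⟨c, hc⟩ := hne
    have hc2 := (Finset.mem_sdiff.mp hc).1
    rw [cells, Finset.mem_filter, Finset.mem_product] at hc2
    have := Finset.mem_range.mp hc2.1.2
    omega
  have hpn : ∀ i < n, p i ≤ n := by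
    intro i _
    calc p i ≤ p 0 := hpA (Nat.zero_le i)
      _ ≤ ∑ j ∈ Finset.range n, p j :=
        Finset.single_le_sum (fun j _ => Nat.zero_le _) (Finset.mem_range.mpr hn)
      _ = n := hpsum
  have hl : 0 < ℓ := by
    rcases Nat.eq_zero_or_pos ℓ with h | h
    · rw [h] at hcard
      exact absurd (Finset.card_eq_zero.mp hcard) (Finset.nonempty_iff_ne_empty.mp hne)
    · exact h
  have hper : ∀ r : ℕ,
      (((r + ℓ : ℕ) : ZMod ℓ) = (a : ZMod ℓ) ∨ ((r + ℓ : ℕ) : ZMod ℓ) = -(a : ZMod ℓ))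
        ↔ ((r : ZMod ℓ) = (a : ZMod ℓ) ∨ (r : ZMod ℓ) = -(a : ZMod ℓ)) := by
    intro r
    have hc : ((r + ℓ : ℕ) : ZMod ℓ) = (r : ZMod ℓ) := by
      push_cast
      simp [ZMod.natCast_self]
    rw [hc]
  have hsym : ∀ j : ℕ, 0 < j → j < ℓ →
      (((j : ZMod ℓ) = (a : ZMod ℓ) ∨ (j : ZMod ℓ) = -(a : ZMod ℓ))
        ↔ (((ℓ - j : ℕ) : ZMod ℓ) = (a : ZMod ℓ) ∨ ((ℓ - j : ℕ) : ZMod ℓ) = -(a : ZMod ℓ))) := by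
    intro j hj0 hjl
    have hc : ((ℓ - j : ℕ) : ZMod ℓ) = -(j : ZMod ℓ) := by
      rw [Nat.cast_sub (le_of_lt hjl), ZMod.natCast_self, zero_sub]
    rw [hc]
    constructor
    · rintro (h | h)
      · right
        rw [h]
      · left
        rw [h, neg_neg]
    · rintro (h | h)
      · right
        exact neg_eq_iff_eq_neg.mp h
      · left
        exact neg_inj.mp h
  have hK := HookAux.card_res ℓ hl ((a : ZMod ℓ))
  rw [← hK]
  exact HookAux.main_aux p q n ℓ hpA hq hle hpn hl hcard hne hconn h2x2
    (fun r : ℕ => (r : ZMod ℓ) = (a : ZMod ℓ) ∨ (r : ZMod ℓ) = -(a : ZMod ℓ))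
    hper hsym
end
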